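/- arXiv:1805.08300 — 7 statements merged into one kernel-verified Lean document; each statement's English description precedes it below -/
import Mathlib

section
/- Let x_1, …, x_n be vectors in ℝ^q with sample mean x̄ = n⁻¹ Σ_{i=1}^n x_i and sample covariance matrix S_n = n⁻¹ Σ_{i=1}^n (x_i − x̄)(x_i − x̄)ᵀ. If S_n is positive definite, then the pair (μ, Σ) = (x̄, S_n) is the unique minimizer, over all μ ∈ ℝ^q and all q×q real symmetric positive definite matrices Σ, of the function l(μ, Σ) = n·log det(Σ) + Σ_{i=1}^n (x_i − μ)ᵀ Σ⁻¹ (x_i − μ). -/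
/-!
With `d = x̄ - μ`, centring the data gives
`l(μ, Σ) = n (log det Σ + tr (Σ⁻¹ Sₙ) + dᵀ Σ⁻¹ d)`, and the quadratic term vanishes only at
`d = 0`. For the remaining part put `M = Sₙ^{1/2} Σ⁻¹ Sₙ^{1/2}`: it is positive definite, with
`tr M = tr (Σ⁻¹ Sₙ)` and `log det M = log det Sₙ - log det Σ`. Summing `log λ ≤ λ - 1` over the
eigenvalues of `M` gives `log det M ≤ tr M - q`, with equality only if every eigenvalue is `1`,
i.e. `M = 1`, i.e. `Σ = Sₙ`.
-/

open Matrix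

namespace Matrix

variable {n : Type*} [Fintype n]

theorem PosDef.dotProduct_mulVec_self_eq_zero_iff {R : Type*} [Ring R] [PartialOrder R]
    [StarRing R] [TrivialStar R] {A : Matrix n n R} (hA : A.PosDef) {v : n → R} :
    v ⬝ᵥ (A *ᵥ v) = 0 ↔ v = 0 := by
  refine ⟨fun h => by_contra fun hv => ?_, fun h => by rw [h, zero_dotProduct]⟩
  have hpos := hA.dotProduct_mulVec_pos hv
  rw [star_trivial, h] at hpos
  exact hpos.false

variable [DecidableEq n]

theorem IsHermitian.eq_one_of_eigenvalues_eq_one {𝕜 : Type*} [RCLike 𝕜] {A : Matrix n n 𝕜}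
    (hA : A.IsHermitian) (h : ∀ i, hA.eigenvalues i = 1) : A = 1 := by
  have hdiag : (RCLike.ofReal ∘ hA.eigenvalues : n → 𝕜) = fun _ => 1 := funext fun i => by simp [h]
  rw [hA.spectral_theorem, hdiag, diagonal_one, map_one]

theorem PosDef.trace_sub_card_sub_log_det {M : Matrix n n ℝ} (hM : M.PosDef) :
    M.trace - Fintype.card n - Real.log M.det =
      ∑ i, (hM.isHermitian.eigenvalues i - 1 - Real.log (hM.isHermitian.eigenvalues i)) := by
  have hdet := hM.isHermitian.det_eq_prod_eigenvalues
  have htr := hM.isHermitian.trace_eq_sum_eigenvalues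
  simp only [RCLike.ofReal_real_eq_id, id] at hdet htr
  rw [hdet, htr, Real.log_prod fun i _ => (hM.eigenvalues_pos i).ne', Finset.sum_sub_distrib,
    Finset.sum_sub_distrib]
  simp

theorem PosDef.log_det_le_trace_sub_card {M : Matrix n n ℝ} (hM : M.PosDef) :
    Real.log M.det ≤ M.trace - Fintype.card n := by
  have hgap : 0 ≤ M.trace - Fintype.card n - Real.log M.det := by
    rw [hM.trace_sub_card_sub_log_det]
    exact Finset.sum_nonneg fun i _ =>
      sub_nonneg.2 (Real.log_le_sub_one_of_pos (hM.eigenvalues_pos i))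
  linarith

theorem PosDef.eq_one_of_log_det_eq_trace_sub_card {M : Matrix n n ℝ} (hM : M.PosDef)
    (h : Real.log M.det = M.trace - Fintype.card n) : M = 1 := by
  refine hM.isHermitian.eq_one_of_eigenvalues_eq_one fun i => ?_
  have hgap : ∑ i, (hM.isHermitian.eigenvalues i - 1 - Real.log (hM.isHermitian.eigenvalues i))
      = 0 := by
    rw [← hM.trace_sub_card_sub_log_det]
    linarith
  have hterm := (Finset.sum_eq_zero_iff_of_nonneg fun j _ =>
    sub_nonneg.2 (Real.log_le_sub_one_of_pos (hM.eigenvalues_pos j))).1 hgap i (Finset.mem_univ i)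
  by_contra hne
  linarith [Real.log_lt_sub_one_of_pos (hM.eigenvalues_pos i) hne]

open scoped MatrixOrder

variable {S Sg : Matrix n n ℝ}

theorem PosDef.sqrt_mul_inv_mul_sqrt (hS : S.PosDef) (hSg : Sg.PosDef) :
    (CFC.sqrt S * Sg⁻¹ * CFC.sqrt S).PosDef := by
  have hB : IsUnit (CFC.sqrt S) := CFC.isUnit_sqrt_iff_isStrictlyPositive.2 hS.isStrictlyPositive
  have hBstar : star (CFC.sqrt S) = CFC.sqrt S := (CFC.sqrt_nonneg S).posSemidef.isHermitian
  simpa only [hBstar] using (IsUnit.posDef_star_right_conjugate_iff hB).2 hSg.inv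

theorem PosSemidef.det_sqrt_mul_inv_mul_sqrt (hS : S.PosSemidef) :
    (CFC.sqrt S * Sg⁻¹ * CFC.sqrt S).det = S.det / Sg.det := by
  have hdet_sqrt : (CFC.sqrt S).det * (CFC.sqrt S).det = S.det := by
    rw [← det_mul, CFC.sqrt_mul_sqrt_self S hS.nonneg]
  rw [det_mul, det_mul, det_nonsing_inv, Ring.inverse_eq_inv', ← hdet_sqrt]
  ring

theorem PosSemidef.trace_sqrt_mul_inv_mul_sqrt (hS : S.PosSemidef) :
    (CFC.sqrt S * Sg⁻¹ * CFC.sqrt S).trace = (Sg⁻¹ * S).trace := by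
  rw [trace_mul_cycle, CFC.sqrt_mul_sqrt_self S hS.nonneg, trace_mul_comm]

theorem PosDef.eq_of_sqrt_mul_inv_mul_sqrt_eq_one (hS : S.PosDef) (hSg : IsUnit Sg.det)
    (h : CFC.sqrt S * Sg⁻¹ * CFC.sqrt S = 1) : Sg = S := by
  have hB : IsUnit (CFC.sqrt S) := CFC.isUnit_sqrt_iff_isStrictlyPositive.2 hS.isStrictlyPositive
  have hBinv : (CFC.sqrt S)⁻¹ = Sg⁻¹ * CFC.sqrt S := inv_eq_right_inv (by rw [← mul_assoc, h])
  have hinv_mul : Sg⁻¹ * S = 1 := by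
    rw [← CFC.sqrt_mul_sqrt_self S hS.posSemidef.nonneg, ← mul_assoc, ← hBinv,
      nonsing_inv_mul _ ((isUnit_iff_isUnit_det _).1 hB)]
  rw [← mul_nonsing_inv_cancel_left Sg S hSg, hinv_mul, mul_one]

theorem PosDef.log_det_add_card_le (hS : S.PosDef) (hSg : Sg.PosDef) :
    Real.log S.det + Fintype.card n ≤ Real.log Sg.det + (Sg⁻¹ * S).trace := by
  have h := (hS.sqrt_mul_inv_mul_sqrt hSg).log_det_le_trace_sub_card
  rw [hS.posSemidef.det_sqrt_mul_inv_mul_sqrt, hS.posSemidef.trace_sqrt_mul_inv_mul_sqrt,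
    Real.log_div hS.det_pos.ne' hSg.det_pos.ne'] at h
  linarith

theorem PosDef.eq_of_log_det_add_trace_eq (hS : S.PosDef) (hSg : Sg.PosDef)
    (h : Real.log Sg.det + (Sg⁻¹ * S).trace = Real.log S.det + Fintype.card n) : Sg = S := by
  refine hS.eq_of_sqrt_mul_inv_mul_sqrt_eq_one hSg.det_pos.ne'.isUnit
    ((hS.sqrt_mul_inv_mul_sqrt hSg).eq_one_of_log_det_eq_trace_sub_card ?_)
  rw [hS.posSemidef.det_sqrt_mul_inv_mul_sqrt, hS.posSemidef.trace_sqrt_mul_inv_mul_sqrt,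
    Real.log_div hS.det_pos.ne' hSg.det_pos.ne']
  linarith

end Matrix

section SampleMoments

variable {ι m R : Type*} [Fintype ι] [Fintype m] [CommRing R]

theorem sum_sub_mean_eq_zero {K E : Type*} [Field K] [CharZero K] [AddCommGroup E] [Module K E]
    [Nonempty ι] (x : ι → E) : ∑ i, (x i - (Fintype.card ι : K)⁻¹ • ∑ j, x j) = 0 := by
  rw [Finset.sum_sub_distrib, Finset.sum_const, Finset.card_univ, ← Nat.cast_smul_eq_nsmul K,
    smul_smul, mul_inv_cancel₀ (Nat.cast_ne_zero.2 Fintype.card_ne_zero), one_smul, sub_self]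

theorem sum_dotProduct_mulVec_sub_eq (A : Matrix m m R) (x : ι → m → R) {c : m → R}
    (hc : ∑ i, (x i - c) = 0) (μ : m → R) :
    ∑ i, (x i - μ) ⬝ᵥ (A *ᵥ (x i - μ)) =
      ∑ i, (x i - c) ⬝ᵥ (A *ᵥ (x i - c)) + Fintype.card ι • ((c - μ) ⬝ᵥ (A *ᵥ (c - μ))) := by
  have hsplit : ∀ i, x i - μ = (x i - c) + (c - μ) := fun i => (sub_add_sub_cancel _ _ _).symm
  simp_rw [hsplit, mulVec_add, dotProduct_add, add_dotProduct, Finset.sum_add_distrib,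
    ← sum_dotProduct, ← dotProduct_sum, ← mulVec_sum, hc, mulVec_zero, zero_dotProduct,
    dotProduct_zero, add_zero, zero_add, Finset.sum_const, Finset.card_univ, smul_dotProduct]

theorem sum_dotProduct_mulVec_eq_trace (A : Matrix m m R) (v : ι → m → R) :
    ∑ i, v i ⬝ᵥ (A *ᵥ v i) = (A * ∑ i, vecMulVec (v i) (v i)).trace := by
  simp_rw [Matrix.mul_sum, trace_sum, mul_vecMulVec, trace_vecMulVec, dotProduct_comm]

theorem sum_dotProduct_mulVec_sub_eq_card_mul {K : Type*} [Field K] [CharZero K] [Nonempty ι]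
    (A : Matrix m m K) (x : ι → m → K) {c : m → K} {S : Matrix m m K}
    (hc : c = (Fintype.card ι : K)⁻¹ • ∑ i, x i)
    (hS : S = (Fintype.card ι : K)⁻¹ • ∑ i, vecMulVec (x i - c) (x i - c)) (μ : m → K) :
    ∑ i, (x i - μ) ⬝ᵥ (A *ᵥ (x i - μ)) =
      Fintype.card ι * ((A * S).trace + (c - μ) ⬝ᵥ (A *ᵥ (c - μ))) := by
  have hcard : (Fintype.card ι : K) ≠ 0 := Nat.cast_ne_zero.2 Fintype.card_ne_zero
  have hcentered : ∑ i, (x i - c) = 0 := hc ▸ sum_sub_mean_eq_zero x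
  have hscatter : ∑ i, vecMulVec (x i - c) (x i - c) = (Fintype.card ι : K) • S := by
    rw [hS, smul_smul, mul_inv_cancel₀ hcard, one_smul]
  rw [sum_dotProduct_mulVec_sub_eq A x hcentered, sum_dotProduct_mulVec_eq_trace, hscatter,
    mul_smul_comm, trace_smul, nsmul_eq_mul, smul_eq_mul, mul_add]

end SampleMoments

/-- the pair (x̄, Sₙ) uniquely minimizes the Gaussian negative
log-likelihood `l(μ, Σ) = n log det Σ + ∑ᵢ (xᵢ − μ)ᵀ Σ⁻¹ (xᵢ − μ)` over
`μ ∈ ℝ^q` and positive definite `Σ`, provided `Sₙ` is positive definite. -/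
theorem stmt_0 (q n : ℕ) (hn : 0 < n) (x : Fin n → Fin q → ℝ)
    (xbar : Fin q → ℝ) (hxbar : xbar = (n : ℝ)⁻¹ • ∑ i, x i)
    (S : Matrix (Fin q) (Fin q) ℝ)
    (hS : S = (n : ℝ)⁻¹ • ∑ i, vecMulVec (x i - xbar) (x i - xbar))
    (hSpd : S.PosDef)
    (l : (Fin q → ℝ) → Matrix (Fin q) (Fin q) ℝ → ℝ)
    (hl : ∀ (μ : Fin q → ℝ) (Sg : Matrix (Fin q) (Fin q) ℝ),
      l μ Sg = (n : ℝ) * Real.log Sg.det +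
        ∑ i, (x i - μ) ⬝ᵥ (Sg⁻¹ *ᵥ (x i - μ))) :
    (∀ (μ : Fin q → ℝ) (Sg : Matrix (Fin q) (Fin q) ℝ), Sg.PosDef →
      l xbar S ≤ l μ Sg) ∧
    (∀ (μ : Fin q → ℝ) (Sg : Matrix (Fin q) (Fin q) ℝ), Sg.PosDef →
      l μ Sg = l xbar S → μ = xbar ∧ Sg = S) := by
  have hn₀ : (0 : ℝ) < n := by exact_mod_cast hn
  have : Nonempty (Fin n) := ⟨⟨0, hn⟩⟩
  have hl_eq : ∀ μ Sg, l μ Sg = n * (Real.log Sg.det + (Sg⁻¹ * S).trace +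
      (xbar - μ) ⬝ᵥ (Sg⁻¹ *ᵥ (xbar - μ))) := by
    intro μ Sg
    rw [hl, sum_dotProduct_mulVec_sub_eq_card_mul (c := xbar) (S := S) _ x
      (by rwa [Fintype.card_fin]) (by rwa [Fintype.card_fin]), Fintype.card_fin]
    ring
  have hl_min : l xbar S = n * (Real.log S.det + q) := by
    rw [hl_eq, nonsing_inv_mul _ hSpd.det_pos.ne'.isUnit, trace_one, Fintype.card_fin, sub_self,
      mulVec_zero, dotProduct_zero, add_zero]
  have hquad_nonneg : ∀ μ Sg, Sg.PosDef → 0 ≤ (xbar - μ) ⬝ᵥ (Sg⁻¹ *ᵥ (xbar - μ)) :=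
    fun μ Sg hSg => by simpa using hSg.inv.posSemidef.dotProduct_mulVec_nonneg (xbar - μ)
  refine ⟨fun μ Sg hSg => ?_, fun μ Sg hSg heq => ?_⟩
  · rw [hl_min, hl_eq]
    have hdet_le := hSpd.log_det_add_card_le hSg
    rw [Fintype.card_fin] at hdet_le
    exact mul_le_mul_of_nonneg_left (by linarith [hquad_nonneg μ Sg hSg]) hn₀.le
  · rw [hl_min, hl_eq, mul_right_inj' hn₀.ne'] at heq
    have hdet_le := hSpd.log_det_add_card_le hSg
    rw [Fintype.card_fin] at hdet_le
    have hquad : (xbar - μ) ⬝ᵥ (Sg⁻¹ *ᵥ (xbar - μ)) = 0 := by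
      linarith [hquad_nonneg μ Sg hSg]
    exact ⟨(sub_eq_zero.1 (hSg.inv.dotProduct_mulVec_self_eq_zero_iff.1 hquad)).symm,
      hSpd.eq_of_log_det_add_trace_eq hSg (by rw [Fintype.card_fin]; linarith)⟩
end

section
/- Let λ₁ ≥ ⋯ ≥ λ_q > 0 and d₁ ≥ ⋯ ≥ d_q > 0 be real numbers, let Λ = diag(λ₁, …, λ_q) and D = diag(d₁, …, d_q). Then for every q×q orthogonal matrix H, tr(H Λ⁻¹ Hᵀ D) ≥ tr(Λ⁻¹ D) = Σ_{j=1}^q d_j/λ_j. -/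
/-!
Writing `P = H ⊙ H` for the entrywise square of `H`, one has
`tr(H Λ⁻¹ Hᵀ D) = ∑ᵢ dᵢ ∑ⱼ Pᵢⱼ / λⱼ`, and `P` is doubly stochastic because `H` is orthogonal.
By Birkhoff's theorem `P` is a convex combination of permutation matrices, and for a
permutation `σ` the rearrangement inequality gives `∑ᵢ dᵢ / λ_{σ i} ≥ ∑ᵢ dᵢ / λᵢ`, since `d` is
decreasing while `1 / λ` is increasing.
-/

open Matrix

variable {n R : Type*} [Fintype n] [DecidableEq n]

theorem Antivary.dotProduct_le_dotProduct_mulVec_of_mem_doublyStochastic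
    [Field R] [LinearOrder R] [IsStrictOrderedRing R] {a b : n → R} (hab : Antivary a b)
    {P : Matrix n n R} (hP : P ∈ doublyStochastic R n) :
    a ⬝ᵥ b ≤ a ⬝ᵥ (P *ᵥ b) := by
  rw [← SetLike.mem_coe, doublyStochastic_eq_convexHull_permMatrix] at hP
  have hlin : IsLinearMap R fun M : Matrix n n R => a ⬝ᵥ (M *ᵥ b) :=
    ⟨fun M N => by rw [add_mulVec, dotProduct_add],
      fun c M => by rw [smul_mulVec, dotProduct_smul]⟩
  refine convexHull_min ?_ (convex_halfSpace_ge hlin _) hP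
  rintro _ ⟨σ, rfl⟩
  simpa [permMatrix_mulVec, dotProduct] using hab.sum_mul_le_sum_mul_comp_perm (σ := σ)

theorem hadamard_self_mem_doublyStochastic [CommRing R] [LinearOrder R] [IsStrictOrderedRing R]
    {H : Matrix n n R} (hH : Hᵀ * H = 1) : H ⊙ H ∈ doublyStochastic R n := by
  have hH' : H * Hᵀ = 1 := mul_eq_one_comm.mp hH
  refine mem_doublyStochastic_iff_sum.mpr ⟨fun i j => ?_, fun i => ?_, fun j => ?_⟩
  · exact mul_self_nonneg (H i j)
  · simpa [mul_apply] using congrFun (congrFun hH' i) i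
  · simpa [mul_apply] using congrFun (congrFun hH j) j

theorem trace_mul_diagonal_mul_transpose_mul_diagonal [CommRing R] (H : Matrix n n R)
    (μ d : n → R) : (H * diagonal μ * Hᵀ * diagonal d).trace = d ⬝ᵥ ((H ⊙ H) *ᵥ μ) := by
  simp only [trace, diag, mul_apply, diagonal_apply, transpose_apply, dotProduct, mulVec,
    hadamard_apply, mul_ite, mul_zero, Finset.sum_ite_eq', Finset.mem_univ, if_true]
  refine Finset.sum_congr rfl fun i _ => ?_
  rw [Finset.sum_mul, Finset.mul_sum]
  exact Finset.sum_congr rfl fun j _ => by ring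

theorem stmt_3_general (q : ℕ) (lam d : Fin q → ℝ)
    (hlam : Antitone lam) (hlampos : ∀ i, 0 < lam i)
    (hd : Antitone d)
    (H : Matrix (Fin q) (Fin q) ℝ) (hH : Hᵀ * H = 1) :
    ((diagonal lam)⁻¹ * diagonal d).trace ≤
      (H * (diagonal lam)⁻¹ * Hᵀ * diagonal d).trace ∧
    ((diagonal lam)⁻¹ * diagonal d).trace = ∑ j, d j / lam j := by
  have hinv : (diagonal lam)⁻¹ = diagonal lam⁻¹ :=
    inv_eq_right_inv <| by simp [diagonal_mul_diagonal, (hlampos _).ne']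
  have htrace : ((diagonal lam)⁻¹ * diagonal d).trace = ∑ j, d j / lam j := by
    simp [hinv, div_eq_inv_mul]
  refine ⟨?_, htrace⟩
  have hanti : Antivary d lam⁻¹ :=
    hd.antivary fun i j hij => inv_anti₀ (hlampos j) (hlam hij)
  rw [hinv, trace_mul_diagonal_mul_transpose_mul_diagonal, diagonal_mul_diagonal, trace_diagonal]
  simpa [dotProduct, mul_comm] using
    hanti.dotProduct_le_dotProduct_mulVec_of_mem_doublyStochastic
      (hadamard_self_mem_doublyStochastic hH)

/-- for decreasing positive `λ`, `d` and any orthogonal `H`,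
`tr(H Λ⁻¹ Hᵀ D) ≥ tr(Λ⁻¹ D) = ∑ d_j / λ_j`. -/
theorem stmt_3 (q : ℕ) (lam d : Fin q → ℝ)
    (hlam : Antitone lam) (hlampos : ∀ i, 0 < lam i)
    (hd : Antitone d) (hdpos : ∀ i, 0 < d i)
    (H : Matrix (Fin q) (Fin q) ℝ) (hH : Hᵀ * H = 1) :
    ((diagonal lam)⁻¹ * diagonal d).trace ≤
      (H * (diagonal lam)⁻¹ * Hᵀ * diagonal d).trace ∧
    ((diagonal lam)⁻¹ * diagonal d).trace = ∑ j, d j / lam j :=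
  stmt_3_general q lam d hlam hlampos hd H hH
end

section
/- Let Π be a function on the q×q real symmetric positive definite matrices satisfying Π(QΣQᵀ) = Π(Σ) for all orthogonal Q. Let S be positive definite with spectral decomposition S = P D Pᵀ, where P is orthogonal and D = diag(d₁, …, d_q) with d₁ ≥ ⋯ ≥ d_q > 0 the eigenvalues of S in decreasing order. Let Σ be any positive definite matrix with eigenvalues λ₁(Σ) ≥ ⋯ ≥ λ_q(Σ) in decreasing order, and set Λ = diag(λ₁(Σ), …, λ_q(Σ)). Then for every η ≥ 0, L(Σ; S, η) ≥ L(P Λ Pᵀ; S, η), where L(Σ; S, η) = tr(Σ⁻¹S) + log det(Σ) + η·Π(Σ). -/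
/-!
Write `Σ = V Λ Vᵀ` with `V` orthogonal. Conjugating by an orthogonal matrix changes neither the
determinant nor the penalty, so `Σ` and `P Λ Pᵀ` differ only in the trace term. With `W = Vᵀ P`,
`tr(Σ⁻¹ S) = λ⁻¹ ⬝ (W ⊙ W) d`, where `W ⊙ W` is doubly stochastic; for `P Λ Pᵀ` the matrix
`W ⊙ W` is the identity. By Birkhoff's theorem the linear form `C ↦ λ⁻¹ ⬝ C d` is minimised over
the doubly stochastic matrices at a permutation matrix, and since `λ⁻¹` increases while `d`
decreases, the rearrangement inequality says the identity is a best permutation.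
-/

open Matrix

/-- The eigenvalues of a Hermitian real matrix, sorted in decreasing order. -/
noncomputable def eigsDesc {q : ℕ} (A : Matrix (Fin q) (Fin q) ℝ)
    (hA : A.IsHermitian) : Fin q → ℝ :=
  fun i => (hA.eigenvalues ∘ Tuple.sort hA.eigenvalues) i.rev

namespace Matrix

variable {n : Type*} [Fintype n] [DecidableEq n]

section CommRing

variable {R : Type*} [CommRing R]

theorem inv_conj_of_transpose_mul_eq_one {Q : Matrix n n R} (hQ : Qᵀ * Q = 1)
    (M : Matrix n n R) : (Q * M * Qᵀ)⁻¹ = Q * M⁻¹ * Qᵀ := by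
  rw [Matrix.mul_inv_rev, Matrix.mul_inv_rev, inv_eq_left_inv hQ,
    inv_eq_left_inv (mul_eq_one_comm.mp hQ), Matrix.mul_assoc]

theorem det_conj_of_transpose_mul_eq_one {Q : Matrix n n R} (hQ : Qᵀ * Q = 1)
    (M : Matrix n n R) : (Q * M * Qᵀ).det = M.det := by
  rw [det_mul, det_mul, mul_right_comm, ← det_mul, mul_eq_one_comm.mp hQ, det_one, one_mul]

theorem trace_diagonal_mul_conj_diagonal (W : Matrix n n R) (g d : n → R) :
    (diagonal g * (W * diagonal d * Wᵀ)).trace = g ⬝ᵥ (W ⊙ W) *ᵥ d := by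
  simp only [trace, diag_apply, diagonal_mul]
  simp only [mul_apply, transpose_apply, diagonal_apply, mul_ite, mul_zero, Finset.sum_ite_eq',
    Finset.mem_univ, if_true, dotProduct, mulVec, hadamard_apply, Finset.mul_sum]
  refine Finset.sum_congr rfl fun i _ => Finset.sum_congr rfl fun j _ => ?_
  ring

theorem trace_conj_diagonal_mul_conj_diagonal (U V : Matrix n n R) (g d : n → R) :
    (U * diagonal g * Uᵀ * (V * diagonal d * Vᵀ)).trace =
      g ⬝ᵥ ((Uᵀ * V) ⊙ (Uᵀ * V)) *ᵥ d := by
  rw [← trace_diagonal_mul_conj_diagonal, Matrix.mul_assoc, Matrix.mul_assoc, trace_mul_comm,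
    transpose_mul, transpose_transpose]
  simp only [Matrix.mul_assoc]

theorem inv_diagonal_of_ne_zero {K : Type*} [Field K] {v : n → K} (hv : ∀ i, v i ≠ 0) :
    (diagonal v)⁻¹ = diagonal v⁻¹ := by
  refine inv_eq_left_inv ?_
  rw [diagonal_mul_diagonal, ← diagonal_one]
  exact congrArg diagonal (funext fun i => inv_mul_cancel₀ (hv i))

theorem conj_diagonal_comp_perm (Q : Matrix n n R) (v : n → R) (τ : Equiv.Perm n) :
    Q.submatrix id τ * diagonal (v ∘ τ) * (Q.submatrix id τ)ᵀ = Q * diagonal v * Qᵀ := by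
  rw [← submatrix_diagonal_equiv, transpose_submatrix, submatrix_mul_equiv,
    submatrix_mul_equiv, submatrix_id_id]

theorem transpose_mul_submatrix_perm_eq_one {Q : Matrix n n R} (hQ : Qᵀ * Q = 1)
    (τ : Equiv.Perm n) : (Q.submatrix id τ)ᵀ * Q.submatrix id τ = 1 := by
  rw [transpose_submatrix]
  exact (submatrix_mul_equiv Qᵀ Q τ (Equiv.refl n) τ).trans (by rw [hQ, submatrix_one_equiv])

end CommRing

theorem IsHermitian.exists_transpose_mul_eq_one_conj_diagonal {A : Matrix n n ℝ}
    (hA : A.IsHermitian) :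
    ∃ U : Matrix n n ℝ, Uᵀ * U = 1 ∧ A = U * diagonal hA.eigenvalues * Uᵀ := by
  refine ⟨hA.eigenvectorUnitary, ?_, ?_⟩
  · simpa [star_eq_conjTranspose] using Unitary.coe_star_mul_self hA.eigenvectorUnitary
  · simpa [Unitary.conjStarAlgAut_apply, star_eq_conjTranspose] using hA.spectral_theorem

theorem hadamard_self_mem_doublyStochastic {W : Matrix n n ℝ} (hW : Wᵀ * W = 1) :
    W ⊙ W ∈ doublyStochastic ℝ n := by
  have hWWt : W * Wᵀ = 1 := mul_eq_one_comm.mp hW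
  rw [mem_doublyStochastic_iff_sum]
  refine ⟨fun i j => mul_self_nonneg (W i j), fun i => ?_, fun j => ?_⟩
  · simpa [mul_apply, one_apply] using congrFun (congrFun hWWt i) i
  · simpa [mul_apply, one_apply] using congrFun (congrFun hW j) j

end Matrix

theorem Antivary.dotProduct_le_dotProduct_mulVec {n : Type*} [Fintype n] [DecidableEq n]
    {g d : n → ℝ} (hgd : Antivary g d) {C : Matrix n n ℝ} (hC : C ∈ doublyStochastic ℝ n) :
    g ⬝ᵥ d ≤ g ⬝ᵥ C *ᵥ d := by
  have hlin : IsLinearMap ℝ fun C : Matrix n n ℝ => g ⬝ᵥ C *ᵥ d :=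
    ⟨fun A B => by rw [add_mulVec, dotProduct_add],
     fun c A => by rw [smul_mulVec, dotProduct_smul]⟩
  rw [← SetLike.mem_coe, doublyStochastic_eq_convexHull_permMatrix] at hC
  refine convexHull_min ?_ (convex_halfSpace_ge hlin _) hC
  rintro _ ⟨σ, rfl⟩
  simpa [permMatrix_mulVec, dotProduct] using hgd.sum_mul_le_sum_mul_comp_perm

theorem Matrix.trace_inv_conj_diagonal_mul_le {n : Type*} [Fintype n] [DecidableEq n]
    {P V : Matrix n n ℝ} (hP : Pᵀ * P = 1) (hV : Vᵀ * V = 1) {l d : n → ℝ}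
    (hl : ∀ i, 0 < l i) (hld : Monovary l d) :
    ((P * diagonal l * Pᵀ)⁻¹ * (P * diagonal d * Pᵀ)).trace ≤
      ((V * diagonal l * Vᵀ)⁻¹ * (P * diagonal d * Pᵀ)).trace := by
  have hW : (Vᵀ * P)ᵀ * (Vᵀ * P) = 1 := by
    rw [transpose_mul, transpose_transpose, Matrix.mul_assoc, ← Matrix.mul_assoc V,
      mul_eq_one_comm.mp hV, Matrix.one_mul, hP]
  rw [inv_conj_of_transpose_mul_eq_one hP, inv_conj_of_transpose_mul_eq_one hV,
    inv_diagonal_of_ne_zero fun i => (hl i).ne', trace_conj_diagonal_mul_conj_diagonal,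
    trace_conj_diagonal_mul_conj_diagonal, hP, hadamard_one, diag_one, Pi.one_def, diagonal_one,
    one_mulVec]
  exact ((antivary_inv_left₀ (f := l) hl).mpr hld).dotProduct_le_dotProduct_mulVec
    (hadamard_self_mem_doublyStochastic hW)

section eigsDesc

variable {q : ℕ} {A : Matrix (Fin q) (Fin q) ℝ}

theorem eigsDesc_eq_comp_perm (hA : A.IsHermitian) :
    eigsDesc A hA = hA.eigenvalues ∘ (Fin.revPerm.trans (Tuple.sort hA.eigenvalues)) :=
  rfl

theorem antitone_eigsDesc (hA : A.IsHermitian) : Antitone (eigsDesc A hA) :=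
  fun _ _ hij => Tuple.monotone_sort hA.eigenvalues (Fin.rev_le_rev.mpr hij)

theorem eigsDesc_pos (hA : A.PosDef) (i : Fin q) : 0 < eigsDesc A hA.isHermitian i :=
  hA.eigenvalues_pos _

theorem Matrix.IsHermitian.exists_transpose_mul_eq_one_conj_diagonal_eigsDesc
    (hA : A.IsHermitian) :
    ∃ V : Matrix (Fin q) (Fin q) ℝ, Vᵀ * V = 1 ∧ A = V * diagonal (eigsDesc A hA) * Vᵀ := by
  obtain ⟨U, hU, hAU⟩ := hA.exists_transpose_mul_eq_one_conj_diagonal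
  set τ := Fin.revPerm.trans (Tuple.sort hA.eigenvalues)
  refine ⟨U.submatrix id τ, transpose_mul_submatrix_perm_eq_one hU τ, ?_⟩
  rw [eigsDesc_eq_comp_perm, conj_diagonal_comp_perm, ← hAU]

end eigsDesc

theorem stmt_4_general (q : ℕ) (Pen : Matrix (Fin q) (Fin q) ℝ → ℝ)
    (hPen : ∀ (A : Matrix (Fin q) (Fin q) ℝ), A.PosDef →
      ∀ Q : Matrix (Fin q) (Fin q) ℝ, Qᵀ * Q = 1 → Pen (Q * A * Qᵀ) = Pen A)
    (S P : Matrix (Fin q) (Fin q) ℝ) (d : Fin q → ℝ)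
    (hP : Pᵀ * P = 1) (hdanti : Antitone d)
    (hSdec : S = P * diagonal d * Pᵀ)
    (A : Matrix (Fin q) (Fin q) ℝ) (hA : A.PosDef)
    (η : ℝ)
    (L : Matrix (Fin q) (Fin q) ℝ → ℝ)
    (hL : ∀ B : Matrix (Fin q) (Fin q) ℝ,
      L B = (B⁻¹ * S).trace + Real.log B.det + η * Pen B) :
    L (P * diagonal (eigsDesc A hA.isHermitian) * Pᵀ) ≤ L A := by
  obtain ⟨V, hV, hAV⟩ := hA.isHermitian.exists_transpose_mul_eq_one_conj_diagonal_eigsDesc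
  have htrace := trace_inv_conj_diagonal_mul_le hP hV (eigsDesc_pos hA)
    ((antitone_eigsDesc hA.isHermitian).monovary hdanti)
  rw [← hSdec, ← hAV] at htrace
  set Λ := diagonal (eigsDesc A hA.isHermitian)
  have hΛ : Λ.PosDef := posDef_diagonal_iff.mpr (eigsDesc_pos hA)
  have hdet : (P * Λ * Pᵀ).det = A.det := by
    rw [hAV, det_conj_of_transpose_mul_eq_one hP, det_conj_of_transpose_mul_eq_one hV]
  have hpen : Pen (P * Λ * Pᵀ) = Pen A := by
    rw [hAV, hPen Λ hΛ P hP, hPen Λ hΛ V hV]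
  rw [hL, hL, hdet, hpen]
  linarith

/-- for an orthogonally invariant penalty `Π`, a positive definite `S`
with spectral decomposition `S = P D Pᵀ` (eigenvalues decreasing), and any positive
definite `Σ` with decreasingly ordered eigenvalue matrix `Λ`, one has
`L(Σ; S, η) ≥ L(P Λ Pᵀ; S, η)` where `L(Σ; S, η) = tr(Σ⁻¹S) + log det Σ + η Π(Σ)`. -/
theorem stmt_4 (q : ℕ) (Pen : Matrix (Fin q) (Fin q) ℝ → ℝ)
    (hPen : ∀ (A : Matrix (Fin q) (Fin q) ℝ), A.PosDef →
      ∀ Q : Matrix (Fin q) (Fin q) ℝ, Qᵀ * Q = 1 → Pen (Q * A * Qᵀ) = Pen A)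
    (S P : Matrix (Fin q) (Fin q) ℝ) (d : Fin q → ℝ)
    (hP : Pᵀ * P = 1) (hdanti : Antitone d) (hdpos : ∀ i, 0 < d i)
    (hSdec : S = P * diagonal d * Pᵀ)
    (A : Matrix (Fin q) (Fin q) ℝ) (hA : A.PosDef)
    (η : ℝ) (hη : 0 ≤ η)
    (L : Matrix (Fin q) (Fin q) ℝ → ℝ)
    (hL : ∀ B : Matrix (Fin q) (Fin q) ℝ,
      L B = (B⁻¹ * S).trace + Real.log B.det + η * Pen B) :
    L (P * diagonal (eigsDesc A hA.isHermitian) * Pᵀ) ≤ L A :=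
  stmt_4_general q Pen hPen S P d hP hdanti hSdec A hA η L hL
end

section
/- Let Π be a nonnegative function on the q×q real symmetric positive definite matrices such that Π(Σ) = π(log λ₁(Σ), …, log λ_q(Σ)) for a convex, permutation-invariant π : ℝ^q → ℝ, where λ₁(Σ) ≥ ⋯ ≥ λ_q(Σ) are the eigenvalues of Σ in decreasing order. Let S be positive definite, set κ_L = inf{Π(Σ) : Σ positive definite} and κ_U = Π(S), and let l(Σ; S) = tr(Σ⁻¹S) + log det(Σ). For η ≥ 0 let Σ̂_η be the unique minimizer over positive definite Σ of l(Σ; S) + η·Π(Σ). Then: (i) for every κ with κ_L < κ ≤ κ_U there is a unique minimizer Σ̃_κ of l(Σ; S) over the set {Σ positive definite : Π(Σ) ≤ κ}; (ii) the map κ ↦ Σ̃_κ is continuous on (κ_L, κ_U]; (iii) for every η ≥ 0 with Π(Σ̂_η) > κ_L one has Σ̂_η = Σ̃_{Π(Σ̂_η)}; and (iv) for every κ ∈ (κ_L, κ_U] there exists η ≥ 0 with Σ̃_κ = Σ̂_η. -/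
open Matrix

/-!
For `η ≥ 0` the penalized minimizer `Σ̂_η` is also the unique minimizer of `l` over
`{Π ≤ Π(Σ̂_η)}`, so `Σ̂` is constant on the level sets of `η ↦ Π(Σ̂_η)`. This function
equals `Π(S) = κ_U` at `η = 0` (because `S` minimizes `l`) and drops below every `κ > κ_L` for
large `η`. The spectral penalty `Π` is continuous, since the partial sums of the
sorted eigenvalues are Lipschitz (Ky Fan), so by the intermediate value theorem every
`κ ∈ (κ_L, κ_U]` is a value `Π(Σ̂_η)` and `Σ̃_κ := Σ̂_η` is well defined. On a compact `[0, B]`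
the map `η ↦ Π(Σ̂_η)` is closed, hence a quotient map onto its image, which makes `κ ↦ Σ̃_κ`
continuous.
-/

open Filter Topology

section Duality

open Set

def IsUniqueMinOn {X : Type*} (φ : X → ℝ) (s : Set X) (a : X) : Prop :=
  a ∈ s ∧ ∀ b ∈ s, φ a ≤ φ b ∧ (φ b = φ a → b = a)

namespace IsUniqueMinOn

variable {X : Type*} {φ f g : X → ℝ} {s t D : Set X} {a b : X}

theorem eq_of_mem (ha : IsUniqueMinOn φ s a) (hb : IsUniqueMinOn φ t b) (hat : a ∈ t)
    (hbs : b ∈ s) : b = a :=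
  (ha.2 b hbs).2 (le_antisymm (hb.2 a hat).1 (ha.2 b hbs).1)

theorem of_penalized {η : ℝ} (h : IsUniqueMinOn (fun b => f b + η * g b) D a) (hη : 0 ≤ η) :
    IsUniqueMinOn f {b | b ∈ D ∧ g b ≤ g a} a := by
  refine ⟨⟨h.1, le_rfl⟩, fun b ⟨hbD, hgb⟩ => ?_⟩
  have hpen := (h.2 b hbD).1
  have hηg : η * g b ≤ η * g a := mul_le_mul_of_nonneg_left hgb hη
  exact ⟨by linarith, fun hfb => (h.2 b hbD).2 (le_antisymm (by linarith) hpen)⟩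

end IsUniqueMinOn

theorem exists_penalty_lt_of_penalized {X : Type*} {f g : X → ℝ} {D : Set X} {x : ℝ → X}
    (hx : ∀ η, 0 ≤ η → IsUniqueMinOn (fun a => f a + η * g a) D (x η))
    (hg : BddBelow (g '' D)) {κ : ℝ} (hκ : sInf (g '' D) < κ) :
    ∃ η, 0 ≤ η ∧ g (x η) < κ := by
  obtain ⟨_, ⟨a, haD, rfl⟩, hga⟩ :=
    (csInf_lt_iff hg ⟨g (x 0), x 0, (hx 0 le_rfl).1, rfl⟩).1 hκ
  -- `x η` beats `a` in the penalized problem and loses to `x 0` in the unpenalized one,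
  -- so `η * (g (x η) - g a) ≤ f a - f (x 0)`.
  set M := f a - f (x 0)
  have hM : 0 ≤ M := by simpa [M] using ((hx 0 le_rfl).2 a haD).1
  set η := M / (κ - g a) + 1
  have hδ : 0 < κ - g a := sub_pos.2 hga
  have hη : 1 ≤ η := le_add_of_nonneg_left (div_nonneg hM hδ.le)
  have hηM : (κ - g a) * η = M + (κ - g a) := by simp only [η]; field_simp
  have h₁ := ((hx η (by linarith)).2 a haD).1
  have h₂ : f (x 0) ≤ f (x η) := by
    simpa using ((hx 0 le_rfl).2 (x η) (hx η (by linarith)).1).1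
  refine ⟨η, by linarith, ?_⟩
  dsimp only at h₁
  nlinarith

theorem IsCompact.continuousOn_image_of_eqOn_comp {α β X : Type*} [TopologicalSpace α]
    [TopologicalSpace β] [T2Space β] [TopologicalSpace X] {K : Set α} (hK : IsCompact K)
    {G : α → β} {F : α → X} (hG : ContinuousOn G K) (hF : ContinuousOn F K) (ψ : β → X)
    (hψ : EqOn (ψ ∘ G) F K) : ContinuousOn ψ (G '' K) := by
  have : CompactSpace K := isCompact_iff_compactSpace.1 hK
  let G' : K → G '' K := fun a => ⟨G a, a, a.2, rfl⟩
  have hG'c : Continuous G' := hG.domRestrict.subtype_mk _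
  have hG'q : Topology.IsQuotientMap G' :=
    hG'c.isClosedMap.isQuotientMap hG'c (fun ⟨_, a, ha, rfl⟩ => ⟨⟨a, ha⟩, rfl⟩)
  rw [continuousOn_iff_continuous_domRestrict, hG'q.continuous_iff]
  convert hF.domRestrict using 1
  funext a
  exact hψ a.2

theorem exists_constrained_argmin_of_penalized {X : Type*} [TopologicalSpace X]
    {f g : X → ℝ} {D : Set X} {x : ℝ → X}
    (hx : ∀ η, 0 ≤ η → IsUniqueMinOn (fun a => f a + η * g a) D (x η))
    (hxc : ContinuousOn x (Ici 0)) (hgx : ContinuousOn (fun η => g (x η)) (Ici 0))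
    (hg : BddBelow (g '' D)) :
    ∃ y : ℝ → X,
      (∀ κ ∈ Ioc (sInf (g '' D)) (g (x 0)), IsUniqueMinOn f {a | a ∈ D ∧ g a ≤ κ} (y κ)) ∧
      ContinuousOn y (Ioc (sInf (g '' D)) (g (x 0))) ∧
      (∀ η, 0 ≤ η → x η = y (g (x η))) ∧
      ∀ κ ∈ Ioc (sInf (g '' D)) (g (x 0)), ∃ η, 0 ≤ η ∧ y κ = x η := by
  let ψ := Function.invFunOn (fun η => g (x η)) (Ici 0)
  have hIVT : ∀ B, 0 ≤ B → Icc (g (x B)) (g (x 0)) ⊆ (fun η => g (x η)) '' Icc 0 B :=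
    fun B hB => intermediate_value_Icc' hB (hgx.mono Icc_subset_Ici_self)
  have hsurj : ∀ κ ∈ Ioc (sInf (g '' D)) (g (x 0)), ∃ η ∈ Ici 0, g (x η) = κ := by
    intro κ hκ
    obtain ⟨B, hB, hgB⟩ := exists_penalty_lt_of_penalized hx hg hκ.1
    obtain ⟨η, hη, rfl⟩ := hIVT B hB ⟨hgB.le, hκ.2⟩
    exact ⟨η, hη.1, rfl⟩
  have hψ : ∀ η, 0 ≤ η → x (ψ (g (x η))) = x η := by
    intro η hη
    obtain ⟨h0, hg⟩ := Function.invFunOn_pos ⟨η, mem_Ici.2 hη, rfl⟩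
    exact ((hx η hη).of_penalized hη).eq_of_mem ((hx _ h0).of_penalized h0)
      ⟨(hx η hη).1, hg.ge⟩ ⟨(hx _ h0).1, hg.le⟩
  refine ⟨x ∘ ψ, fun κ hκ => ?_, fun κ₀ hκ₀ => ?_, fun η hη => (hψ η hη).symm,
    fun κ hκ => ⟨ψ κ, (Function.invFunOn_pos (hsurj κ hκ)).1, rfl⟩⟩
  · obtain ⟨h0, hg⟩ := Function.invFunOn_pos (hsurj κ hκ)
    have h := (hx _ h0).of_penalized h0
    rwa [hg] at h
  · obtain ⟨B, hB, hgB⟩ := exists_penalty_lt_of_penalized hx hg hκ₀.1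
    have hcont : ContinuousOn (x ∘ ψ) ((fun η => g (x η)) '' Icc 0 B) :=
      isCompact_Icc.continuousOn_image_of_eqOn_comp (hgx.mono Icc_subset_Ici_self)
        (hxc.mono Icc_subset_Ici_self) _ fun η hη => hψ η hη.1
    refine ((hcont.mono (hIVT B hB)) κ₀ ⟨hgB.le, hκ₀.2⟩).mono_of_mem_nhdsWithin ?_
    exact mem_nhdsWithin.2 ⟨Ioi (g (x B)), isOpen_Ioi, hgB, fun κ hκ => ⟨hκ.1.le, hκ.2.2⟩⟩

end Duality

open Finset

theorem sum_mul_le_sum_of_threshold {ι : Type*} [Fintype ι] {lam c : ι → ℝ}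
    {T : Finset ι} {p : ℝ} (hT : ∀ i ∈ T, p ≤ lam i) (hTc : ∀ i ∉ T, lam i ≤ p)
    (hc0 : ∀ i, 0 ≤ c i) (hc1 : ∀ i, c i ≤ 1) (hc : ∑ i, c i = #T) :
    ∑ i, lam i * c i ≤ ∑ i ∈ T, lam i := by
  classical
  have hdiff : ∑ i ∈ T, lam i - ∑ i, lam i * c i
      = ∑ i, (lam i - p) * ((if i ∈ T then 1 else 0) - c i) := by
    simp only [mul_sub, sub_mul, mul_ite, mul_one, mul_zero, sum_sub_distrib, sum_ite_mem,
      univ_inter, ← mul_sum, hc, sum_const, nsmul_eq_mul]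
    ring
  have hnonneg : 0 ≤ ∑ i, (lam i - p) * ((if i ∈ T then 1 else 0) - c i) :=
    sum_nonneg fun i _ => by
      split_ifs with hi
      · exact mul_nonneg (sub_nonneg.2 (hT i hi)) (sub_nonneg.2 (hc1 i))
      · exact mul_nonneg_of_nonpos_of_nonpos (sub_nonpos.2 (hTc i hi)) (by linarith [hc0 i])
  linarith

theorem Antitone.sum_mul_le_sum_val_lt {q k : ℕ} {lam c : Fin q → ℝ} (hlam : Antitone lam)
    (hk : k ≤ q) (hc0 : ∀ i, 0 ≤ c i) (hc1 : ∀ i, c i ≤ 1) (hc : ∑ i, c i = k) :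
    ∑ i, lam i * c i ≤ ∑ i ∈ univ.filter (fun i : Fin q => (i : ℕ) < k), lam i := by
  obtain ⟨p, hp_lt, hp_ge⟩ :
      ∃ p, (∀ i : Fin q, (i : ℕ) < k → p ≤ lam i) ∧ ∀ i : Fin q, k ≤ (i : ℕ) → lam i ≤ p := by
    rcases hk.lt_or_eq with hlt | rfl
    · exact ⟨lam ⟨k, hlt⟩, fun i hi => hlam (Fin.le_def.2 hi.le), fun i hi => hlam hi⟩
    · exact ⟨⨅ i, lam i, fun i _ => ciInf_le (Finite.bddBelow_range lam) i,
        fun i hi => absurd i.2 (not_lt.2 hi)⟩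
  refine sum_mul_le_sum_of_threshold (T := univ.filter fun i : Fin q => (i : ℕ) < k)
    (fun i hi => hp_lt i (mem_filter.1 hi).2) (fun i hi => hp_ge i (by simpa using hi)) hc0 hc1 ?_
  rw [hc, Fin.card_filter_val_lt, min_eq_right hk]

section UnitaryEntries

variable {ι : Type*} [Fintype ι] [DecidableEq ι] {U : Matrix ι ι ℝ}

omit [DecidableEq ι] in
theorem star_mul_mul_apply_self (Y M : Matrix ι ι ℝ) (i : ι) :
    (star Y * M * Y) i i = ∑ a, ∑ b, Y a i * M a b * Y b i := by
  simp only [mul_apply, star_apply, star_trivial, sum_mul]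
  exact sum_comm

theorem sum_row_sq_eq_one_of_mem_unitaryGroup (hU : U ∈ unitaryGroup ι ℝ) (i : ι) :
    ∑ j, U i j ^ 2 = 1 := by
  have h := congr_fun (congr_fun (mem_unitaryGroup_iff.1 hU) i) i
  simpa [mul_apply, sq] using h

theorem sum_col_sq_eq_one_of_mem_unitaryGroup (hU : U ∈ unitaryGroup ι ℝ) (i : ι) :
    ∑ j, U j i ^ 2 = 1 := by
  have h := congr_fun (congr_fun (mem_unitaryGroup_iff'.1 hU) i) i
  simpa [mul_apply, sq] using h

theorem abs_star_mul_mul_apply_self_le (hU : U ∈ unitaryGroup ι ℝ) (M : Matrix ι ι ℝ) (i : ι) :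
    |(star U * M * U) i i| ≤ ∑ a, ∑ b, |M a b| := by
  have hentry : ∀ a b, |U a b| ≤ 1 := fun a b => by
    simpa using entry_norm_bound_of_unitary hU a b
  rw [star_mul_mul_apply_self]
  refine (abs_sum_le_sum_abs _ _).trans (sum_le_sum fun a _ =>
    (abs_sum_le_sum_abs _ _).trans (sum_le_sum fun b _ => ?_))
  rw [abs_mul, abs_mul]
  calc |U a i| * |M a b| * |U b i| ≤ 1 * |M a b| * 1 := by
        gcongr
        · exact hentry a i
        · exact hentry b i
    _ = |M a b| := by ring

end UnitaryEntries

section SortedEigenvalues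

variable {q : ℕ}

noncomputable def eigsDescPerm {A : Matrix (Fin q) (Fin q) ℝ} (hA : A.IsHermitian) :
    Equiv.Perm (Fin q) :=
  Fin.revPerm.trans (Tuple.sort hA.eigenvalues)

theorem eigsDesc_apply {A : Matrix (Fin q) (Fin q) ℝ} (hA : A.IsHermitian) (i : Fin q) :
    eigsDesc A hA i = hA.eigenvalues (eigsDescPerm hA i) :=
  rfl

theorem eigsDesc_antitone {A : Matrix (Fin q) (Fin q) ℝ} (hA : A.IsHermitian) :
    Antitone (eigsDesc A hA) :=
  fun _ _ hij => Tuple.monotone_sort hA.eigenvalues (Fin.rev_le_rev.2 hij)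

noncomputable def sortedEigenvalues (A : Matrix (Fin q) (Fin q) ℝ) : Fin q → ℝ :=
  if hA : A.IsHermitian then eigsDesc A hA else 0

theorem sortedEigenvalues_of_isHermitian {A : Matrix (Fin q) (Fin q) ℝ} (hA : A.IsHermitian) :
    sortedEigenvalues A = eigsDesc A hA :=
  dif_pos hA

noncomputable def topEigSum (k : ℕ) (A : Matrix (Fin q) (Fin q) ℝ) : ℝ :=
  ∑ i ∈ univ.filter (fun i : Fin q => (i : ℕ) < k), sortedEigenvalues A i

theorem topEigSum_succ (A : Matrix (Fin q) (Fin q) ℝ) (i : Fin q) :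
    topEigSum (i + 1) A = topEigSum i A + sortedEigenvalues A i := by
  have hfilter : univ.filter (fun j : Fin q => (j : ℕ) < i + 1)
      = insert i (univ.filter fun j : Fin q => (j : ℕ) < i) := by
    ext j
    simp only [mem_filter, mem_univ, true_and, mem_insert, Fin.ext_iff]
    omega
  rw [topEigSum, hfilter, sum_insert (by simp), topEigSum, add_comm]

theorem sum_diag_conj_le_topEigSum {B W : Matrix (Fin q) (Fin q) ℝ} (hB : B.IsHermitian)
    (hW : W ∈ unitaryGroup (Fin q) ℝ) (T : Finset (Fin q)) :
    ∑ i ∈ T, (star W * B * W) i i ≤ topEigSum #T B := by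
  set V := (hB.eigenvectorUnitary : Matrix (Fin q) (Fin q) ℝ)
  set Y := star V * W
  have hY : Y ∈ unitaryGroup (Fin q) ℝ := mul_mem (Unitary.star_mem hB.eigenvectorUnitary.2) hW
  have hconj : star W * B * W = star Y * diagonal hB.eigenvalues * Y := by
    conv_lhs => rw [hB.spectral_theorem]
    simp [Y, V, Matrix.mul_assoc, star_mul]
  set c : Fin q → ℝ := fun j => ∑ i ∈ T, Y j i ^ 2
  have hdiag : ∑ i ∈ T, (star W * B * W) i i = ∑ j, hB.eigenvalues j * c j := by
    rw [hconj]
    simp only [star_mul_mul_apply_self, diagonal_apply, c, mul_sum]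
    rw [sum_comm]
    refine sum_congr rfl fun j _ => sum_congr rfl fun i _ => ?_
    simp [sq, mul_comm, mul_left_comm]
  have hc1 : ∀ j, c j ≤ 1 := fun j =>
    (sum_le_sum_of_subset_of_nonneg (subset_univ T) fun _ _ _ => sq_nonneg _).trans_eq
      (sum_row_sq_eq_one_of_mem_unitaryGroup hY j)
  have hc : ∑ j, c j = #T := by
    simp only [c]
    rw [sum_comm]
    simp [sum_col_sq_eq_one_of_mem_unitaryGroup hY]
  rw [hdiag, ← Equiv.sum_comp (eigsDescPerm hB), topEigSum, sortedEigenvalues_of_isHermitian hB]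
  exact (eigsDesc_antitone hB).sum_mul_le_sum_val_lt
    ((card_le_univ T).trans_eq (Fintype.card_fin q)) (fun _ => sum_nonneg fun _ _ => sq_nonneg _)
    (fun _ => hc1 _) (by rw [Equiv.sum_comp, hc])

theorem exists_sum_diag_conj_eq_topEigSum {A : Matrix (Fin q) (Fin q) ℝ} (hA : A.IsHermitian)
    {k : ℕ} (hk : k ≤ q) :
    ∃ T : Finset (Fin q), #T = k ∧
      ∑ i ∈ T, (star (hA.eigenvectorUnitary : Matrix (Fin q) (Fin q) ℝ) * A *
        hA.eigenvectorUnitary) i i = topEigSum k A := by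
  refine ⟨(univ.filter fun i : Fin q => (i : ℕ) < k).map (eigsDescPerm hA).toEmbedding, ?_, ?_⟩
  · rw [card_map, Fin.card_filter_val_lt, min_eq_right hk]
  · have hdiag := hA.conjStarAlgAut_star_eigenvectorUnitary
    rw [Unitary.conjStarAlgAut_star_apply] at hdiag
    rw [hdiag, sum_map, topEigSum, sortedEigenvalues_of_isHermitian hA]
    simp [eigsDesc_apply]

theorem topEigSum_le_add {A B : Matrix (Fin q) (Fin q) ℝ} (hA : A.IsHermitian)
    (hB : B.IsHermitian) {k : ℕ} (hk : k ≤ q) :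
    topEigSum k A ≤ topEigSum k B + k * ∑ a, ∑ b, |A a b - B a b| := by
  obtain ⟨T, hT, hsum⟩ := exists_sum_diag_conj_eq_topEigSum hA hk
  set U := (hA.eigenvectorUnitary : Matrix (Fin q) (Fin q) ℝ)
  have hU : U ∈ unitaryGroup (Fin q) ℝ := hA.eigenvectorUnitary.2
  calc topEigSum k A
      = ∑ i ∈ T, (star U * B * U) i i + ∑ i ∈ T, (star U * (A - B) * U) i i := by
        rw [← hsum, ← sum_add_distrib]
        simp [Matrix.mul_sub, Matrix.sub_mul]
    _ ≤ topEigSum k B + ∑ _i ∈ T, ∑ a, ∑ b, |(A - B) a b| := by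
        gcongr with i
        · exact hT ▸ sum_diag_conj_le_topEigSum hB hU T
        · exact (le_abs_self _).trans (abs_star_mul_mul_apply_self_le hU _ i)
    _ = topEigSum k B + k * ∑ a, ∑ b, |A a b - B a b| := by simp [hT]

theorem continuousOn_topEigSum {k : ℕ} (hk : k ≤ q) :
    ContinuousOn (topEigSum k) {A : Matrix (Fin q) (Fin q) ℝ | A.IsHermitian} := by
  intro A hA
  have hN : Tendsto (fun B : Matrix (Fin q) (Fin q) ℝ => (k : ℝ) * ∑ a, ∑ b, |B a b - A a b|)
      (𝓝[{A | A.IsHermitian}] A) (𝓝 0) := by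
    have hc : Continuous fun B : Matrix (Fin q) (Fin q) ℝ => (k : ℝ) * ∑ a, ∑ b, |B a b - A a b| :=
      by fun_prop
    simpa using (hc.tendsto A).mono_left nhdsWithin_le_nhds
  rw [ContinuousWithinAt, tendsto_iff_norm_sub_tendsto_zero]
  refine squeeze_zero' (Eventually.of_forall fun _ => norm_nonneg _) ?_ hN
  filter_upwards [self_mem_nhdsWithin] with B hB
  rw [Real.norm_eq_abs, abs_sub_le_iff]
  constructor
  · linarith [topEigSum_le_add hB hA hk]
  · have h := topEigSum_le_add hA hB hk
    simp_rw [abs_sub_comm (A _ _)] at h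
    linarith

theorem continuousOn_sortedEigenvalues :
    ContinuousOn (sortedEigenvalues (q := q)) {A | A.IsHermitian} :=
  continuousOn_pi.2 fun i => ((continuousOn_topEigSum i.2).sub
    (continuousOn_topEigSum i.2.le)).congr fun A _ => by
      rw [Pi.sub_apply, ← Nat.add_one, topEigSum_succ]; ring

end SortedEigenvalues

namespace Matrix.PosDef

variable {n : Type*} [Fintype n] [DecidableEq n]

theorem log_det_le_trace_sub_card_s9 {B : Matrix n n ℝ} (hB : B.PosDef) :
    Real.log B.det ≤ B.trace - Fintype.card n := by
  have hν := hB.eigenvalues_pos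
  calc Real.log B.det = ∑ i, Real.log (hB.isHermitian.eigenvalues i) := by
        rw [hB.isHermitian.det_eq_prod_eigenvalues]
        exact Real.log_prod fun i _ => (hν i).ne'
    _ ≤ ∑ i, (hB.isHermitian.eigenvalues i - 1) :=
        sum_le_sum fun i _ => Real.log_le_sub_one_of_pos (hν i)
    _ = B.trace - Fintype.card n := by
        simp [hB.isHermitian.trace_eq_sum_eigenvalues, sum_sub_distrib]

end Matrix.PosDef

noncomputable def gaussianNLL {n : Type*} [Fintype n] [DecidableEq n] (S A : Matrix n n ℝ) : ℝ :=
  (A⁻¹ * S).trace + Real.log A.det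

open scoped MatrixOrder in
theorem gaussianNLL_self_le {n : Type*} [Fintype n] [DecidableEq n] {S A : Matrix n n ℝ}
    (hS : S.PosDef) (hA : A.PosDef) : gaussianNLL S S ≤ gaussianNLL S A := by
  have hSdet := hS.det_pos
  rw [gaussianNLL, gaussianNLL, nonsing_inv_mul S (isUnit_iff_ne_zero.2 hSdet.ne'), trace_one]
  obtain ⟨R, hR, rfl⟩ :=
    CStarAlgebra.isStrictlyPositive_iff_eq_star_mul_self.mp hS.isStrictlyPositive
  have hM : (R * A⁻¹ * Rᴴ).PosDef := by
    simpa using hA.inv.conjTranspose_mul_mul_same (B := Rᴴ)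
      (mulVec_injective_iff_isUnit.2 ((isUnit_conjTranspose R).2 hR))
  have htr : (R * A⁻¹ * Rᴴ).trace = (A⁻¹ * (star R * R)).trace := by
    rw [trace_mul_comm, ← Matrix.mul_assoc, trace_mul_comm, star_eq_conjTranspose]
  have hdet : (R * A⁻¹ * Rᴴ).det = (star R * R).det / A.det := by
    rw [det_mul, det_mul, det_mul, det_nonsing_inv, Ring.inverse_eq_inv', star_eq_conjTranspose]
    ring
  have h := hM.log_det_le_trace_sub_card_s9
  rw [htr, hdet, Real.log_div hSdet.ne' hA.det_pos.ne'] at h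
  linarith

theorem continuousOn_of_eq_comp_log_eigsDesc {q : ℕ} {π : (Fin q → ℝ) → ℝ} (hπ : Continuous π)
    {Pen : Matrix (Fin q) (Fin q) ℝ → ℝ}
    (hPen : ∀ (A : Matrix (Fin q) (Fin q) ℝ) (hA : A.PosDef),
      Pen A = π fun i => Real.log (eigsDesc A hA.isHermitian i)) :
    ContinuousOn Pen {A | A.PosDef} := by
  have hlog : ContinuousOn (fun A i => Real.log (sortedEigenvalues A i))
      {A : Matrix (Fin q) (Fin q) ℝ | A.PosDef} :=
    continuousOn_pi.2 fun i => ((continuous_apply i).comp_continuousOn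
      (continuousOn_sortedEigenvalues.mono fun _ hA => hA.isHermitian)).log fun A hA => by
        rw [Function.comp_apply, sortedEigenvalues_of_isHermitian hA.isHermitian, eigsDesc_apply]
        exact (hA.eigenvalues_pos _).ne'
  refine (hπ.comp_continuousOn hlog).congr fun A hA => ?_
  simp [hPen A hA, sortedEigenvalues_of_isHermitian hA.isHermitian]

theorem stmt_9_general (q : ℕ) (π : (Fin q → ℝ) → ℝ)
    (hπconv : ConvexOn ℝ Set.univ π)
    (Pen : Matrix (Fin q) (Fin q) ℝ → ℝ)
    (hPennn : ∀ A : Matrix (Fin q) (Fin q) ℝ, A.PosDef → 0 ≤ Pen A)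
    (hPen : ∀ (A : Matrix (Fin q) (Fin q) ℝ) (hA : A.PosDef),
      Pen A = π fun i => Real.log (eigsDesc A hA.isHermitian i))
    (S : Matrix (Fin q) (Fin q) ℝ) (hS : S.PosDef)
    (l : Matrix (Fin q) (Fin q) ℝ → ℝ)
    (hl : ∀ A : Matrix (Fin q) (Fin q) ℝ, l A = (A⁻¹ * S).trace + Real.log A.det)
    (κL κU : ℝ)
    (hκL : κL = sInf (Pen '' {A : Matrix (Fin q) (Fin q) ℝ | A.PosDef}))
    (hκU : κU = Pen S)
    (Sighat : ℝ → Matrix (Fin q) (Fin q) ℝ)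
    (hmin : ∀ η : ℝ, 0 ≤ η → (Sighat η).PosDef ∧
      ∀ A : Matrix (Fin q) (Fin q) ℝ, A.PosDef →
        (l (Sighat η) + η * Pen (Sighat η) ≤ l A + η * Pen A) ∧
        (l A + η * Pen A = l (Sighat η) + η * Pen (Sighat η) → A = Sighat η))
    (hcont : ContinuousOn Sighat (Set.Ici 0)) :
    ∃ Sigtil : ℝ → Matrix (Fin q) (Fin q) ℝ,
      (∀ κ ∈ Set.Ioc κL κU, (Sigtil κ).PosDef ∧ Pen (Sigtil κ) ≤ κ ∧
        ∀ A : Matrix (Fin q) (Fin q) ℝ, A.PosDef → Pen A ≤ κ →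
          l (Sigtil κ) ≤ l A ∧ (l A = l (Sigtil κ) → A = Sigtil κ)) ∧
      ContinuousOn Sigtil (Set.Ioc κL κU) ∧
      (∀ η : ℝ, 0 ≤ η → κL < Pen (Sighat η) → Sighat η = Sigtil (Pen (Sighat η))) ∧
      (∀ κ ∈ Set.Ioc κL κU, ∃ η : ℝ, 0 ≤ η ∧ Sigtil κ = Sighat η) := by
  obtain rfl : l = gaussianNLL S := funext hl
  subst hκL hκU
  have hx : ∀ η, 0 ≤ η → IsUniqueMinOn (fun A => gaussianNLL S A + η * Pen A)
      {A | A.PosDef} (Sighat η) := hmin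
  have hx0 : Sighat 0 = S := by
    obtain ⟨hx0D, hx0min⟩ := hx 0 le_rfl
    refine ((hx0min S hS).2 (le_antisymm ?_ (hx0min S hS).1)).symm
    simpa using gaussianNLL_self_le hS hx0D
  have hgx : ContinuousOn (fun η => Pen (Sighat η)) (Set.Ici 0) :=
    (continuousOn_of_eq_comp_log_eigsDesc (continuousOn_univ.1 (hπconv.continuousOn isOpen_univ))
      hPen).comp hcont fun η hη => (hmin η hη).1
  obtain ⟨y, hy_min, hy_cont, hy_eq, hy_surj⟩ := exists_constrained_argmin_of_penalized hx hcont
    hgx ⟨0, by rintro _ ⟨A, hA, rfl⟩; exact hPennn A hA⟩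
  rw [hx0] at hy_min hy_cont hy_surj
  refine ⟨y, fun κ hκ => ?_, hy_cont, fun η hη _ => hy_eq η hη, hy_surj⟩
  obtain ⟨⟨hyD, hyκ⟩, hy⟩ := hy_min κ hκ
  exact ⟨hyD, hyκ, fun A hA hAκ => hy A ⟨hA, hAκ⟩⟩

/-- duality between the penalized problem and the constrained problem.
With `κ_L = inf Π`, `κ_U = Π(S)`, and `Σ̂_η` the unique penalized minimizer
(continuous in `η`): (i) for `κ_L < κ ≤ κ_U` there is a unique minimizer `Σ̃_κ` of
`l(Σ; S)` over `{Π(Σ) ≤ κ}`; (ii) `κ ↦ Σ̃_κ` is continuous on `(κ_L, κ_U]`;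
(iii) if `Π(Σ̂_η) > κ_L` then `Σ̂_η = Σ̃_{Π(Σ̂_η)}`; (iv) every `Σ̃_κ` equals some
`Σ̂_η`. -/
theorem stmt_9 (q : ℕ) (π : (Fin q → ℝ) → ℝ)
    (hπconv : ConvexOn ℝ Set.univ π)
    (hπperm : ∀ (σ : Equiv.Perm (Fin q)) (y : Fin q → ℝ), π (y ∘ σ) = π y)
    (Pen : Matrix (Fin q) (Fin q) ℝ → ℝ)
    (hPennn : ∀ A : Matrix (Fin q) (Fin q) ℝ, A.PosDef → 0 ≤ Pen A)
    (hPen : ∀ (A : Matrix (Fin q) (Fin q) ℝ) (hA : A.PosDef),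
      Pen A = π fun i => Real.log (eigsDesc A hA.isHermitian i))
    (S : Matrix (Fin q) (Fin q) ℝ) (hS : S.PosDef)
    (l : Matrix (Fin q) (Fin q) ℝ → ℝ)
    (hl : ∀ A : Matrix (Fin q) (Fin q) ℝ, l A = (A⁻¹ * S).trace + Real.log A.det)
    (κL κU : ℝ)
    (hκL : κL = sInf (Pen '' {A : Matrix (Fin q) (Fin q) ℝ | A.PosDef}))
    (hκU : κU = Pen S)
    (Sighat : ℝ → Matrix (Fin q) (Fin q) ℝ)
    (hmin : ∀ η : ℝ, 0 ≤ η → (Sighat η).PosDef ∧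
      ∀ A : Matrix (Fin q) (Fin q) ℝ, A.PosDef →
        (l (Sighat η) + η * Pen (Sighat η) ≤ l A + η * Pen A) ∧
        (l A + η * Pen A = l (Sighat η) + η * Pen (Sighat η) → A = Sighat η))
    (hcont : ContinuousOn Sighat (Set.Ici 0)) :
    ∃ Sigtil : ℝ → Matrix (Fin q) (Fin q) ℝ,
      (∀ κ ∈ Set.Ioc κL κU, (Sigtil κ).PosDef ∧ Pen (Sigtil κ) ≤ κ ∧
        ∀ A : Matrix (Fin q) (Fin q) ℝ, A.PosDef → Pen A ≤ κ →
          l (Sigtil κ) ≤ l A ∧ (l A = l (Sigtil κ) → A = Sigtil κ)) ∧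
      ContinuousOn Sigtil (Set.Ioc κL κU) ∧
      (∀ η : ℝ, 0 ≤ η → κL < Pen (Sighat η) → Sighat η = Sigtil (Pen (Sighat η))) ∧
      (∀ κ ∈ Set.Ioc κL κU, ∃ η : ℝ, 0 ≤ η ∧ Sigtil κ = Sighat η) :=
  stmt_9_general q π hπconv Pen hPennn hPen S hS l hl κL κU hκL hκU Sighat hmin hcont
end

section
/- Let 𝒟 be a closed subset of ℝ^p, let f, g : 𝒟 → ℝ be continuous with g(x) > 0 for all x ∈ 𝒟, and let 0 ≤ η₀ < η₁. For η ∈ [η₀, η₁] define h(x; η) = f(x) + η·g(x), and suppose that for every η ∈ [η₀, η₁] the function h(·; η) has a unique global minimizer x(η) ∈ 𝒟. If the sublevel set {x ∈ 𝒟 : h(x; η₀) ≤ c} is compact for every c ≥ inf{h(x; η₀) : x ∈ 𝒟}, then the map η ↦ x(η) is continuous on [η₀, η₁). -/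
/-!
Since `g > 0`, every minimizer `x(η)` with `η ∈ [η₀, η₁]` satisfies
`h(x(η); η₀) ≤ h(x(η); η) ≤ h(x(η₀); η) ≤ h(x(η₀); η₁)`, so all of them lie in one compact
sublevel set of `h(·; η₀)`. As `η → η*`, any cluster point of `x(η)` is, by joint continuity of
`h`, a minimizer of `h(·; η*)`, hence equals `x(η*)`; a net in a compact set with a unique
cluster point converges to it.
-/

open Set Filter Topology

theorem Filter.Tendsto.mapClusterPt_prodMk {α X Y : Type*} [TopologicalSpace X]
    [TopologicalSpace Y] {F : Filter α} {u : α → X} {v : α → Y} {a : X} {b : Y}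
    (hu : Tendsto u F (𝓝 a)) (hv : MapClusterPt b F v) :
    MapClusterPt (a, b) F fun t => (u t, v t) := by
  rw [((𝓝 a).basis_sets.prod_nhds (𝓝 b).basis_sets).mapClusterPt_iff_frequently]
  rintro ⟨s, t⟩ ⟨hs, ht⟩
  exact ((mapClusterPt_iff_frequently.1 hv t ht).and_eventually (hu hs)).mono
    fun _ h => ⟨h.2, h.1⟩

section ArgminContinuity

variable {T X : Type*} [TopologicalSpace T] [TopologicalSpace X] {D : Set X} {h : T × X → ℝ}

theorem mem_and_isMinOn_of_mapClusterPt (hD : IsClosed D) (hh : ContinuousOn h (univ ×ˢ D))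
    {l : Filter T} {t₀ : T} (hl : l ≤ 𝓝 t₀) {x : T → X} {y : X}
    (hmin : ∀ᶠ t in l, x t ∈ D ∧ IsMinOn (fun w => h (t, w)) D (x t))
    (hy : MapClusterPt y l x) : y ∈ D ∧ IsMinOn (fun w => h (t₀, w)) D y := by
  have hpair : MapClusterPt (t₀, y) l fun t => (t, x t) := (tendsto_id'.2 hl).mapClusterPt_prodMk hy
  refine ⟨hD.mem_of_mapClusterPt hy (hmin.mono fun _ ht => ht.1), fun z hz => ?_⟩
  have hclosed : IsClosed {p ∈ univ ×ˢ D | h p ≤ h (p.1, z)} :=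
    (isClosed_univ.prod hD).isClosed_le hh
      (hh.comp (continuous_fst.prodMk continuous_const).continuousOn fun _ _ => ⟨trivial, hz⟩)
  exact (hclosed.mem_of_mapClusterPt hpair (hmin.mono fun t ht => ⟨⟨trivial, ht.1⟩, ht.2 hz⟩)).2

theorem continuousOn_of_unique_isMinOn (hD : IsClosed D) (hh : ContinuousOn h (univ ×ˢ D))
    {S : Set T} {K : Set X} (hK : IsCompact K) {x : T → X} (hxK : MapsTo x S K)
    (hmin : ∀ t ∈ S, x t ∈ D ∧ IsMinOn (fun w => h (t, w)) D (x t))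
    (huniq : ∀ t ∈ S, ∀ y ∈ D, IsMinOn (fun w => h (t, w)) D y → y = x t) :
    ContinuousOn x S := fun t₀ ht₀ =>
  hK.tendsto_nhds_of_unique_mapClusterPt (eventually_nhdsWithin_of_forall hxK) fun y _ hy =>
    have ⟨hyD, hymin⟩ := mem_and_isMinOn_of_mapClusterPt hD hh nhdsWithin_le_nhds
      (eventually_nhdsWithin_of_forall hmin) hy
    huniq t₀ ht₀ y hyD hymin

end ArgminContinuity

theorem stmt_14_general (p : ℕ) (D : Set (Fin p → ℝ)) (hD : IsClosed D)
    (f g : (Fin p → ℝ) → ℝ) (hf : ContinuousOn f D) (hg : ContinuousOn g D)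
    (hgpos : ∀ x ∈ D, 0 < g x)
    (η₀ η₁ : ℝ) (hη : η₀ < η₁)
    (xmin : ℝ → (Fin p → ℝ))
    (hxmin : ∀ η ∈ Set.Icc η₀ η₁, xmin η ∈ D ∧
      ∀ x ∈ D, (f (xmin η) + η * g (xmin η) ≤ f x + η * g x) ∧
        (f x + η * g x = f (xmin η) + η * g (xmin η) → x = xmin η))
    (hcompact : ∀ c : ℝ, sInf ((fun x => f x + η₀ * g x) '' D) ≤ c →
      IsCompact {x ∈ D | f x + η₀ * g x ≤ c}) :
    ContinuousOn xmin (Set.Ico η₀ η₁) := by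
  have hisMin : ∀ η ∈ Icc η₀ η₁, IsMinOn (fun x => f x + η * g x) D (xmin η) :=
    fun η hη' => isMinOn_iff.2 fun x hx => ((hxmin η hη').2 x hx).1
  have hη₀mem : η₀ ∈ Icc η₀ η₁ := left_mem_Icc.2 hη.le
  have hx₀D := (hxmin η₀ hη₀mem).1
  have hinf : sInf ((fun x => f x + η₀ * g x) '' D) = f (xmin η₀) + η₀ * g (xmin η₀) :=
    ((hisMin η₀ hη₀mem).isGLB hx₀D).csInf_eq ⟨_, xmin η₀, hx₀D, rfl⟩
  have hsublevel : MapsTo xmin (Icc η₀ η₁)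
      {x ∈ D | f x + η₀ * g x ≤ f (xmin η₀) + η₁ * g (xmin η₀)} := fun η hη' => by
    have hxD := (hxmin η hη').1
    refine ⟨hxD, ?_⟩
    calc f (xmin η) + η₀ * g (xmin η) ≤ f (xmin η) + η * g (xmin η) := by
          gcongr; exacts [(hgpos _ hxD).le, hη'.1]
      _ ≤ f (xmin η₀) + η * g (xmin η₀) := hisMin η hη' hx₀D
      _ ≤ f (xmin η₀) + η₁ * g (xmin η₀) := by gcongr; exacts [(hgpos _ hx₀D).le, hη'.2]
  have hK := hcompact _ (hinf.trans_le (hsublevel hη₀mem).2)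
  have hcont : ContinuousOn (fun q : ℝ × (Fin p → ℝ) => f q.2 + q.1 * g q.2) (univ ×ˢ D) :=
    (hf.comp continuousOn_snd fun _ hq => hq.2).add
      (continuousOn_fst.mul (hg.comp continuousOn_snd fun _ hq => hq.2))
  refine (continuousOn_of_unique_isMinOn hD hcont hK hsublevel
    (fun η hη' => ⟨(hxmin η hη').1, hisMin η hη'⟩) fun η hη' y hy hymin => ?_).mono
    Ico_subset_Icc_self
  exact ((hxmin η hη').2 y hy).2 (le_antisymm (hymin (hxmin η hη').1) (hisMin η hη' hy))

/-- Lemma cont: continuity of the argmin.  Let `𝒟 ⊆ ℝ^p` be closed,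
`f, g` continuous on `𝒟` with `g > 0`, `0 ≤ η₀ < η₁`, and suppose
`h(x; η) = f(x) + η g(x)` has a unique global minimizer `x(η) ∈ 𝒟` for each
`η ∈ [η₀, η₁]`.  If every sublevel set `{x ∈ 𝒟 : h(x; η₀) ≤ c}` with
`c ≥ inf_𝒟 h(·; η₀)` is compact, then `η ↦ x(η)` is continuous on `[η₀, η₁)`. -/
theorem stmt_14 (p : ℕ) (D : Set (Fin p → ℝ)) (hD : IsClosed D)
    (f g : (Fin p → ℝ) → ℝ) (hf : ContinuousOn f D) (hg : ContinuousOn g D)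
    (hgpos : ∀ x ∈ D, 0 < g x)
    (η₀ η₁ : ℝ) (hη₀ : 0 ≤ η₀) (hη : η₀ < η₁)
    (xmin : ℝ → (Fin p → ℝ))
    (hxmin : ∀ η ∈ Set.Icc η₀ η₁, xmin η ∈ D ∧
      ∀ x ∈ D, (f (xmin η) + η * g (xmin η) ≤ f x + η * g x) ∧
        (f x + η * g x = f (xmin η) + η * g (xmin η) → x = xmin η))
    (hcompact : ∀ c : ℝ, sInf ((fun x => f x + η₀ * g x) '' D) ≤ c →
      IsCompact {x ∈ D | f x + η₀ * g x ≤ c}) :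
    ContinuousOn xmin (Set.Ico η₀ η₁) :=
  stmt_14_general p D hD f g hf hg hgpos η₀ η₁ hη xmin hxmin hcompact
end

section
/- Let Π be a nonnegative function on the q×q real symmetric positive definite matrices such that Π(Σ) = π(log λ₁(Σ), …, log λ_q(Σ)) for a convex, permutation-invariant π : ℝ^q → ℝ, and suppose Π(Σ*) = 0 for some positive definite Σ*. Let (S_n) be a sequence of positive definite matrices converging to a positive definite matrix Σ_o, and for each n and each η ≥ 0 let Σ̂_{n,η} denote the unique minimizer over positive definite Σ of L(Σ; S_n, η) = tr(Σ⁻¹S_n) + log det(Σ) + η·Π(Σ). Then there exist constants 0 < c ≤ C < ∞ such that for all n and all η ≥ 0, every eigenvalue of Σ̂_{n,η} lies in [c, C]; in other words, the set {Σ̂_{n,η} : n ∈ ℕ, η ≥ 0} is contained in a compact subset of the cone of positive definite matrices. -/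
open Matrix

/-!
Comparing the loss at `Σ̂` with the loss at `Σ*`, where the penalty vanishes, bounds
`tr (Σ̂⁻¹ S_n) + log det Σ̂` uniformly, because `tr (Σ*⁻¹ S_n)` converges. Since `S_n → Σ_o ≻ 0`,
there is `m > 0` with `m • 1 ≤ S_n` for all `n`, so that quantity is at least
`∑ᵢ (m / μᵢ + log μᵢ)` over the eigenvalues `μᵢ` of `Σ̂`. Each summand is at least `1 + log m`,
hence each one is bounded above as well, and `m / t + log t ≤ K` confines `t` to a compact
subinterval of `(0, ∞)`.
-/

open Filter Topology
open scoped MatrixOrder ComplexOrder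

lemma exists_pos_forall_of_eventually_atTop {P : ℝ → ℕ → Prop}
    (hanti : ∀ {r s k}, r ≤ s → P s k → P r k) (hP : ∀ k, ∃ r > 0, P r k)
    (hev : ∃ r > 0, ∀ᶠ k in atTop, P r k) : ∃ r > 0, ∀ k, P r k := by
  suffices ∀ N, ∀ r > 0, (∀ k ≥ N, P r k) → ∃ r > 0, ∀ k, P r k by
    obtain ⟨r, hr, hrP⟩ := hev
    obtain ⟨N, hN⟩ := eventually_atTop.mp hrP
    exact this N r hr hN
  intro N
  induction N with
  | zero => exact fun r hr hN => ⟨r, hr, fun k => hN k k.zero_le⟩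
  | succ N ih =>
    intro r hr hN
    obtain ⟨s, hs, hsP⟩ := hP N
    refine ih (min r s) (lt_min hr hs) fun k hk => ?_
    rcases hk.eq_or_lt with rfl | hlt
    · exact hanti (min_le_right r s) hsP
    · exact hanti (min_le_left r s) (hN k hlt)

lemma add_card_sub_one_nsmul_le_sum {ι M : Type*} [Fintype ι] [AddCommMonoid M] [PartialOrder M]
    [IsOrderedAddMonoid M] {f : ι → M} {a : M} (h : ∀ j, a ≤ f j) (i : ι) :
    f i + (Fintype.card ι - 1) • a ≤ ∑ j, f j := by
  classical
  rw [← Finset.add_sum_erase _ f (Finset.mem_univ i), ← Finset.card_univ,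
    ← Finset.card_erase_of_mem (Finset.mem_univ i)]
  gcongr
  exact Finset.card_nsmul_le_sum _ f a fun j _ => h j

namespace Real

lemma one_add_log_le_div_add_log {m t : ℝ} (hm : 0 < m) (ht : 0 < t) :
    1 + log m ≤ m / t + log t := by
  have := log_le_sub_one_of_pos (div_pos hm ht)
  rw [log_div hm.ne' ht.ne'] at this
  linarith

lemma exists_Icc_of_div_add_log_le {m : ℝ} (hm : 0 < m) (K : ℝ) :
    ∃ c C, 0 < c ∧ c ≤ C ∧ ∀ t, 0 < t → m / t + log t ≤ K → t ∈ Set.Icc c C := by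
  set D := max (K - 1 - log (m / 2)) 1
  have hD : 0 < D := lt_max_of_lt_right one_pos
  refine ⟨m / (2 * D), max (m / (2 * D)) (exp K), by positivity, le_max_left _ _,
    fun t ht hK => ⟨?_, le_max_of_le_right ?_⟩⟩
  · -- `m / (2t) + log t ≥ 1 + log (m / 2)`, so the other half of `m / t` is at most `D`
    have hhalf : m / 2 / t ≤ D := by
      have := one_add_log_le_div_add_log (half_pos hm) ht
      have : m / t = 2 * (m / 2 / t) := by ring
      exact le_max_of_le_left (by linarith)
    rw [div_le_iff₀ ht] at hhalf
    rw [div_le_iff₀ (by positivity)]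
    linarith
  · rw [← log_le_iff_le_exp ht]
    linarith [div_pos hm ht]

end Real

namespace Matrix

variable {n 𝕜 : Type*} [Fintype n] [DecidableEq n] [RCLike 𝕜]

lemma PosSemidef.trace_mul_nonneg {A B : Matrix n n 𝕜} (hA : A.PosSemidef) (hB : B.PosSemidef) :
    0 ≤ (A * B).trace := by
  have hsqrt : (CFC.sqrt A).IsHermitian := (CFC.sqrt_nonneg A).posSemidef.isHermitian
  rw [← CFC.sqrt_mul_sqrt_self A hA.nonneg, ← trace_mul_cycle (CFC.sqrt A) B]
  simpa only [hsqrt.eq] using (hB.conjTranspose_mul_mul_same (CFC.sqrt A)).trace_nonneg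

lemma IsHermitian.trace_cfc {A : Matrix n n 𝕜} (hA : A.IsHermitian) (f : ℝ → ℝ) :
    (cfc f A).trace = ∑ i, (f (hA.eigenvalues i) : 𝕜) := by
  rw [hA.cfc_eq, IsHermitian.cfc, Unitary.conjStarAlgAut_apply, trace_mul_cycle,
    Unitary.coe_star_mul_self, one_mul, trace_diagonal]
  rfl

lemma PosDef.trace_inv {A : Matrix n n 𝕜} (hA : A.PosDef) :
    A⁻¹.trace = ∑ i, ((hA.isHermitian.eigenvalues i)⁻¹ : 𝕜) := by
  have hinv : cfc (·⁻¹ : ℝ → ℝ) A = A⁻¹ := by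
    simpa using cfc_inv_id (R := ℝ) hA.isUnit.unit hA.isHermitian.isSelfAdjoint
  simp [← hinv, hA.isHermitian.trace_cfc]

lemma PosDef.log_det {A : Matrix n n ℝ} (hA : A.PosDef) :
    Real.log A.det = ∑ i, Real.log (hA.isHermitian.eigenvalues i) := by
  rw [hA.isHermitian.det_eq_prod_eigenvalues, RCLike.ofReal_real_eq_id]
  exact Real.log_prod fun i _ => (hA.eigenvalues_pos i).ne'

lemma PosDef.sum_div_add_log_eigenvalues_le {A S : Matrix n n ℝ} (hA : A.PosDef) {m : ℝ}
    (hS : algebraMap ℝ _ m ≤ S) :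
    ∑ i, (m / hA.isHermitian.eigenvalues i + Real.log (hA.isHermitian.eigenvalues i)) ≤
      (A⁻¹ * S).trace + Real.log A.det := by
  have htrace : m * A⁻¹.trace ≤ (A⁻¹ * S).trace := by
    have := hA.inv.posSemidef.trace_mul_nonneg (le_iff.mp hS)
    rwa [Algebra.algebraMap_eq_smul_one, mul_sub, trace_sub, mul_smul_comm, mul_one, trace_smul,
      smul_eq_mul, sub_nonneg] at this
  rw [hA.trace_inv, Finset.mul_sum] at htrace
  simp only [RCLike.ofReal_real_eq_id, id] at htrace
  simpa only [Finset.sum_add_distrib, hA.log_det, div_eq_mul_inv] using add_le_add_left htrace _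

lemma PosDef.exists_pos_algebraMap_le {A : Matrix n n 𝕜} (hA : A.PosDef) :
    ∃ r > 0, algebraMap ℝ _ r ≤ A := by
  cases isEmpty_or_nonempty n
  · exact ⟨1, one_pos, (Subsingleton.elim _ _).le⟩
  rw [CFC.exists_pos_algebraMap_le_iff hA.isHermitian.isSelfAdjoint,
    hA.isHermitian.spectrum_real_eq_range_eigenvalues]
  rintro _ ⟨i, rfl⟩
  exact hA.eigenvalues_pos i

section LinftyOpNorm

attribute [local instance] Matrix.linftyOpNormedRing Matrix.linftyOpNormedAlgebra

lemma IsHermitian.neg_algebraMap_norm_le {E : Matrix n n 𝕜} (hE : E.IsHermitian) :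
    -algebraMap ℝ _ ‖E‖ ≤ E := by
  rw [← map_neg, algebraMap_le_iff_le_spectrum hE.isSelfAdjoint]
  intro x hx
  cases isEmpty_or_nonempty n
  · simp [spectrum.of_subsingleton] at hx
  exact neg_le_of_abs_le (spectrum.norm_le_norm_of_mem hx)

lemma eventually_algebraMap_le_of_tendsto {ι : Type*} {l : Filter ι} {S : ι → Matrix n n 𝕜}
    {A : Matrix n n 𝕜} (hS : ∀ k, (S k).IsHermitian) (hlim : Tendsto S l (𝓝 A))
    (hA : A.PosDef) : ∃ r > 0, ∀ᶠ k in l, algebraMap ℝ _ r ≤ S k := by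
  obtain ⟨r, hr, hrA⟩ := hA.exists_pos_algebraMap_le
  have hsmall : ∀ᶠ k in l, ‖S k - A‖ ≤ r / 2 :=
    (tendsto_iff_norm_sub_tendsto_zero.mp hlim).eventually_le_const (half_pos hr)
  refine ⟨r / 2, half_pos hr, hsmall.mono fun k hk => ?_⟩
  have hE := ((hS k).sub hA.isHermitian).neg_algebraMap_norm_le
  calc algebraMap ℝ _ (r / 2) = algebraMap ℝ _ r - algebraMap ℝ _ (r / 2) := by
        rw [← map_sub, sub_half]
    _ ≤ A - algebraMap ℝ _ ‖S k - A‖ := by gcongr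
    _ ≤ A + (S k - A) := by rw [sub_eq_add_neg]; gcongr
    _ = S k := add_sub_cancel A (S k)

end LinftyOpNorm

lemma exists_pos_forall_algebraMap_le_of_tendsto {S : ℕ → Matrix n n 𝕜} {A : Matrix n n 𝕜}
    (hS : ∀ k, (S k).PosDef) (hlim : Tendsto S atTop (𝓝 A)) (hA : A.PosDef) :
    ∃ r > 0, ∀ k, algebraMap ℝ _ r ≤ S k :=
  exists_pos_forall_of_eventually_atTop
    (fun hrs hs => (algebraMap_mono (β := Matrix n n 𝕜) hrs).trans hs)
    (fun k => (hS k).exists_pos_algebraMap_le)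
    (eventually_algebraMap_le_of_tendsto (fun k => (hS k).isHermitian) hlim hA)

end Matrix

theorem stmt_16_general (q : ℕ)
    (Pen : Matrix (Fin q) (Fin q) ℝ → ℝ)
    (hPennn : ∀ A : Matrix (Fin q) (Fin q) ℝ, A.PosDef → 0 ≤ Pen A)
    (Sigstar : Matrix (Fin q) (Fin q) ℝ) (hSigstar : Sigstar.PosDef)
    (hSigstar0 : Pen Sigstar = 0)
    (S : ℕ → Matrix (Fin q) (Fin q) ℝ) (hSpd : ∀ n, (S n).PosDef)
    (Sigo : Matrix (Fin q) (Fin q) ℝ) (hSigo : Sigo.PosDef)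
    (hSconv : Filter.Tendsto S Filter.atTop (nhds Sigo))
    (Sighat : ℕ → ℝ → Matrix (Fin q) (Fin q) ℝ)
    (hSighat : ∀ n (η : ℝ), 0 ≤ η → (Sighat n η).PosDef ∧
      ∀ A : Matrix (Fin q) (Fin q) ℝ, A.PosDef →
        (((Sighat n η)⁻¹ * S n).trace + Real.log (Sighat n η).det +
            η * Pen (Sighat n η) ≤
          (A⁻¹ * S n).trace + Real.log A.det + η * Pen A) ∧
        ((A⁻¹ * S n).trace + Real.log A.det + η * Pen A =
          ((Sighat n η)⁻¹ * S n).trace + Real.log (Sighat n η).det +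
            η * Pen (Sighat n η) → A = Sighat n η)) :
    ∃ c C : ℝ, 0 < c ∧ c ≤ C ∧
      ∀ n (η : ℝ), 0 ≤ η → ∀ (h : (Sighat n η).IsHermitian) (i : Fin q),
        h.eigenvalues i ∈ Set.Icc c C := by
  obtain ⟨m, hm, hmS⟩ := exists_pos_forall_algebraMap_le_of_tendsto hSpd hSconv hSigo
  obtain ⟨B, hB⟩ : BddAbove (Set.range fun n => (Sigstar⁻¹ * S n).trace) :=
    (((continuous_const.matrix_mul continuous_id).matrix_trace.tendsto Sigo).comp
      hSconv).bddAbove_range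
  obtain ⟨c, C, hc, hcC, hIcc⟩ := Real.exists_Icc_of_div_add_log_le hm
    (B + Real.log Sigstar.det - (q - 1) • (1 + Real.log m))
  refine ⟨c, C, hc, hcC, fun n η hη h i => hIcc _ ((hSighat n η hη).1.eigenvalues_pos i) ?_⟩
  obtain ⟨hpd, hmin⟩ := hSighat n η hη
  have hsum := calc
    ∑ j, (m / hpd.isHermitian.eigenvalues j + Real.log (hpd.isHermitian.eigenvalues j))
        ≤ ((Sighat n η)⁻¹ * S n).trace + Real.log (Sighat n η).det :=
      hpd.sum_div_add_log_eigenvalues_le (hmS n)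
    _ ≤ ((Sighat n η)⁻¹ * S n).trace + Real.log (Sighat n η).det + η * Pen (Sighat n η) :=
      le_add_of_nonneg_right (mul_nonneg hη (hPennn _ hpd))
    _ ≤ (Sigstar⁻¹ * S n).trace + Real.log Sigstar.det + η * Pen Sigstar :=
      (hmin Sigstar hSigstar).1
    _ ≤ B + Real.log Sigstar.det := by
      rw [hSigstar0, mul_zero, add_zero]
      exact add_le_add_left (hB ⟨n, rfl⟩) _
  have hrest := add_card_sub_one_nsmul_le_sum
    (fun j => Real.one_add_log_le_div_add_log hm (hpd.eigenvalues_pos j)) i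
  rw [Fintype.card_fin] at hrest
  exact le_sub_iff_add_le.mpr (hrest.trans hsum)

/-- uniform eigenvalue bounds for the penalized estimators.  If
`S_n → Σ_o` (all positive definite) and `Σ̂_{n,η}` uniquely minimizes
`L(Σ; S_n, η)`, then there are `0 < c ≤ C < ∞` such that every eigenvalue of every
`Σ̂_{n,η}` (for all `n` and all `η ≥ 0`) lies in `[c, C]`. -/
theorem stmt_16 (q : ℕ) (π : (Fin q → ℝ) → ℝ)
    (hπconv : ConvexOn ℝ Set.univ π)
    (hπperm : ∀ (σ : Equiv.Perm (Fin q)) (y : Fin q → ℝ), π (y ∘ σ) = π y)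
    (Pen : Matrix (Fin q) (Fin q) ℝ → ℝ)
    (hPennn : ∀ A : Matrix (Fin q) (Fin q) ℝ, A.PosDef → 0 ≤ Pen A)
    (hPen : ∀ (A : Matrix (Fin q) (Fin q) ℝ) (hA : A.PosDef),
      Pen A = π fun i => Real.log (eigsDesc A hA.isHermitian i))
    (Sigstar : Matrix (Fin q) (Fin q) ℝ) (hSigstar : Sigstar.PosDef)
    (hSigstar0 : Pen Sigstar = 0)
    (S : ℕ → Matrix (Fin q) (Fin q) ℝ) (hSpd : ∀ n, (S n).PosDef)
    (Sigo : Matrix (Fin q) (Fin q) ℝ) (hSigo : Sigo.PosDef)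
    (hSconv : Filter.Tendsto S Filter.atTop (nhds Sigo))
    (Sighat : ℕ → ℝ → Matrix (Fin q) (Fin q) ℝ)
    (hSighat : ∀ n (η : ℝ), 0 ≤ η → (Sighat n η).PosDef ∧
      ∀ A : Matrix (Fin q) (Fin q) ℝ, A.PosDef →
        (((Sighat n η)⁻¹ * S n).trace + Real.log (Sighat n η).det +
            η * Pen (Sighat n η) ≤
          (A⁻¹ * S n).trace + Real.log A.det + η * Pen A) ∧
        ((A⁻¹ * S n).trace + Real.log A.det + η * Pen A =
          ((Sighat n η)⁻¹ * S n).trace + Real.log (Sighat n η).det +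
            η * Pen (Sighat n η) → A = Sighat n η)) :
    ∃ c C : ℝ, 0 < c ∧ c ≤ C ∧
      ∀ n (η : ℝ), 0 ≤ η → ∀ (h : (Sighat n η).IsHermitian) (i : Fin q),
        h.eigenvalues i ∈ Set.Icc c C :=
  stmt_16_general q Pen hPennn Sigstar hSigstar hSigstar0 S hSpd Sigo hSigo hSconv Sighat hSighat
end

section
/- Let q ≥ 2, let d₁ > d₂ > ⋯ > d_q > 0, and let a₁ > a₂ > ⋯ > a_q be real numbers with Σ_{j=1}^q a_j = 0. For η ≥ 0 let λ̂(η) denote the unique minimizer over {λ ∈ ℝ^q : λ₁ ≥ ⋯ ≥ λ_q > 0} of ℒ(λ; d, η) = Σ_{j=1}^q ( d_j/λ_j + (1 + η·a_j)·log λ_j ). Set D_k = Σ_{j=1}^k d_j, A_k = Σ_{j=1}^k a_j, d̄ = D_q/q, and η_k = (q·D_k/D_q − k)/A_k for k = 1, …, q−1 (note A_k > 0 for these k). Then λ̂(η) is the constant vector (d̄, …, d̄) if and only if η ≥ max{η_k : k = 1, …, q−1}; equivalently, the last knot η(𝒢₁) := inf{η ≥ 0 : λ̂(η) is constant} equals max{η_k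 : k = 1, …, q−1}. -/
/-!
For a strictly decreasing sequence the mean of the first `k` terms exceeds the overall mean, so
`A_k > 0` and `η_k > 0`. Write `w_j = 1 + η a_j` and `g_j = w_j - d_j / d̄`. Since
`c/λ ≥ 1 + log (c/λ)`, `ℒ(λ) ≥ ℒ(d̄) + ∑ g_j x_j` with `x_j = log λ_j - log d̄`, and Abel summation
turns this sum into `-∑_k G_{k+1} (x_{k+1} - x_k)`, where the partial sums
`G_k = k + η A_k - q D_k / D_q` vanish at `k = q`. For ordered `λ` the increments are nonpositive,
and `G_k ≥ 0` is exactly `η ≥ η_k`, so for `η ≥ max η_k` the constant vector `d̄` is the minimizer.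
If instead `G_k < 0`, scaling the first `k` coordinates of `d̄` by a factor `> 1` strictly decreases
`ℒ`. Finally a constant minimizer must be `d̄`, the best constant vector.
-/

open Finset Real

theorem mul_sum_range_lt_mul_sum_range {q k : ℕ} {a : ℕ → ℝ}
    (ha : ∀ j, j + 1 < q → a (j + 1) < a j) (hk0 : 0 < k) (hkq : k < q) :
    k * ∑ j ∈ range q, a j < q * ∑ j ∈ range k, a j := by
  have hanti : StrictAntiOn a (Set.Iic (q - 1)) :=
    strictAntiOn_Iic_of_succ_lt fun m hm => ha m (by omega)
  have hpos : 0 < ∑ i ∈ range k, ∑ j ∈ Ico k q, (a i - a j) := by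
    refine sum_pos (fun i hi => sum_pos (fun j hj => ?_) (nonempty_Ico.2 hkq))
      (nonempty_range_iff.2 hk0.ne')
    have hi := mem_range.1 hi
    have hj := mem_Ico.1 hj
    exact sub_pos.2 (hanti (Set.mem_Iic.2 (by omega)) (Set.mem_Iic.2 (by omega)) (by omega))
  have hexpand : ∑ i ∈ range k, ∑ j ∈ Ico k q, (a i - a j)
      = q * ∑ j ∈ range k, a j - k * ∑ j ∈ range q, a j := by
    simp only [sum_sub_distrib, sum_const, Nat.card_Ico, card_range, nsmul_eq_mul, ← mul_sum]
    rw [← sum_range_add_sum_Ico a hkq.le, Nat.cast_sub hkq.le]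
    ring
  linarith

theorem sum_range_pos_of_sum_eq_zero {q k : ℕ} {a : ℕ → ℝ}
    (ha : ∀ j, j + 1 < q → a (j + 1) < a j) (hsum : ∑ j ∈ range q, a j = 0)
    (hk0 : 0 < k) (hkq : k < q) : 0 < ∑ j ∈ range k, a j := by
  have h := mul_sum_range_lt_mul_sum_range ha hk0 hkq
  rw [hsum, mul_zero] at h
  exact pos_of_mul_pos_right h q.cast_nonneg

theorem sum_mul_nonneg_of_partialSums_nonneg {q : ℕ} {g x : ℕ → ℝ}
    (hx : ∀ j, j + 1 < q → x (j + 1) ≤ x j)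
    (hg : ∀ k, 0 < k → k < q → 0 ≤ ∑ j ∈ range k, g j) (hgq : ∑ j ∈ range q, g j = 0) :
    0 ≤ ∑ j ∈ range q, g j * x j := by
  have hparts := sum_range_by_parts x g q
  simp only [smul_eq_mul, hgq, mul_zero, zero_sub] at hparts
  simp_rw [mul_comm (g _)]
  rw [hparts, neg_nonneg]
  refine sum_nonpos fun i hi => ?_
  have hi : i + 1 < q := by have := mem_range.1 hi; omega
  exact mul_nonpos_of_nonpos_of_nonneg (sub_nonpos.2 (hx i hi)) (hg (i + 1) i.succ_pos hi)

theorem sum_range_pos {q : ℕ} {d : ℕ → ℝ} (hdpos : ∀ j < q, 0 < d j) (hq : 0 < q) :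
    0 < ∑ j ∈ range q, d j :=
  sum_pos (fun j hj => hdpos j (mem_range.1 hj)) (nonempty_range_iff.2 hq.ne')

theorem sum_range_one_add_mul (a : ℕ → ℝ) (η : ℝ) (k : ℕ) :
    ∑ j ∈ range k, (1 + η * a j) = k + η * ∑ j ∈ range k, a j := by
  rw [sum_add_distrib, sum_const, card_range, nsmul_one, mul_sum]

namespace Elasso

/-- The paper's `ℒ(λ; d, η)` is `loss q d (fun j => 1 + η * a j) λ`. -/
noncomputable def loss (q : ℕ) (d w lam : ℕ → ℝ) : ℝ :=
  ∑ j ∈ range q, (d j / lam j + w j * log (lam j))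

variable {q : ℕ} {d w lam a : ℕ → ℝ} {c η : ℝ}

theorem loss_congr {lam' : ℕ → ℝ} (h : ∀ j < q, lam j = lam' j) :
    loss q d w lam = loss q d w lam' :=
  sum_congr rfl fun j hj => by rw [h j (mem_range.1 hj)]

theorem loss_const (c : ℝ) :
    loss q d w (fun _ => c) = (∑ j ∈ range q, d j) / c + (∑ j ∈ range q, w j) * log c := by
  simp only [loss, sum_add_distrib, sum_div, sum_mul]

theorem loss_const_add_sum_le_loss (hd : ∀ j < q, 0 ≤ d j) (hc : 0 < c)
    (hlam : ∀ j < q, 0 < lam j) :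
    loss q d w (fun _ => c) + ∑ j ∈ range q, (w j - d j / c) * (log (lam j) - log c)
      ≤ loss q d w lam := by
  rw [loss, loss, ← sum_add_distrib]
  refine sum_le_sum fun j hj => ?_
  have hj := mem_range.1 hj
  have hlog := log_le_sub_one_of_pos (div_pos hc (hlam j hj))
  rw [log_div hc.ne' (hlam j hj).ne'] at hlog
  have key := mul_le_mul_of_nonneg_left hlog (div_nonneg (hd j hj) hc.le)
  have hexpand : d j / c * (c / lam j - 1) = d j / lam j - d j / c := by
    field_simp
  linear_combination key + hexpand

theorem loss_const_le_loss_const {c' : ℝ} (hd : ∀ j < q, 0 ≤ d j) (hc : 0 < c) (hc' : 0 < c')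
    (hw : ∑ j ∈ range q, w j = (∑ j ∈ range q, d j) / c) :
    loss q d w (fun _ => c) ≤ loss q d w (fun _ => c') := by
  have h := loss_const_add_sum_le_loss (w := w) (lam := fun _ => c') hd hc fun _ _ => hc'
  rwa [← sum_mul, sum_sub_distrib, ← sum_div, hw, sub_self, zero_mul, add_zero] at h

theorem loss_const_le_loss_of_antitone (hd : ∀ j < q, 0 ≤ d j) (hc : 0 < c)
    (hanti : ∀ j, j + 1 < q → lam (j + 1) ≤ lam j) (hlam : ∀ j < q, 0 < lam j)
    (hpart : ∀ k, 0 < k → k < q → (∑ j ∈ range k, d j) / c ≤ ∑ j ∈ range k, w j)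
    (hw : ∑ j ∈ range q, w j = (∑ j ∈ range q, d j) / c) :
    loss q d w (fun _ => c) ≤ loss q d w lam := by
  have hsum : 0 ≤ ∑ j ∈ range q, (w j - d j / c) * (log (lam j) - log c) := by
    refine sum_mul_nonneg_of_partialSums_nonneg (fun j hj => ?_) (fun k hk0 hkq => ?_) ?_
    · exact sub_le_sub_right (log_le_log (hlam _ hj) (hanti j hj)) _
    · rw [sum_sub_distrib, ← sum_div, sub_nonneg]
      exact hpart k hk0 hkq
    · rw [sum_sub_distrib, ← sum_div, hw, sub_self]
  linarith [loss_const_add_sum_le_loss (w := w) hd hc hlam]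

theorem exists_loss_lt_loss_const {k : ℕ} (hkq : k ≤ q) (hc : 0 < c)
    (hw : 0 < ∑ j ∈ range k, w j) (hwd : ∑ j ∈ range k, w j < (∑ j ∈ range k, d j) / c) :
    ∃ lam : ℕ → ℝ, (∀ j, j + 1 < q → lam (j + 1) ≤ lam j) ∧ (∀ j < q, 0 < lam j) ∧
      loss q d w lam < loss q d w (fun _ => c) := by
  set W := ∑ j ∈ range k, w j
  set s := (∑ j ∈ range k, d j) / c
  set ρ := s / W
  have hρ1 : 1 < ρ := (one_lt_div hw).2 hwd
  have hρ0 : 0 < ρ := one_pos.trans hρ1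
  let lam : ℕ → ℝ := fun j => if j < k then c * ρ else c
  refine ⟨lam, fun j _ => ?_, fun j _ => ?_, ?_⟩
  · simp only [lam]
    split_ifs with hj1 hj0 hj0
    · exact le_rfl
    · omega
    · exact le_mul_of_one_le_right hc.le hρ1.le
    · exact le_rfl
  · simp only [lam]
    split_ifs <;> positivity
  have hsplit (lam' : ℕ → ℝ) : loss q d w lam'
      = loss k d w lam' + ∑ j ∈ Ico k q, (d j / lam' j + w j * log (lam' j)) :=
    (sum_range_add_sum_Ico _ hkq).symm
  have hhead : loss k d w lam = loss k d w (fun _ => c * ρ) :=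
    loss_congr fun j hj => if_pos hj
  have htail : ∑ j ∈ Ico k q, (d j / lam j + w j * log (lam j))
      = ∑ j ∈ Ico k q, (d j / c + w j * log c) :=
    sum_congr rfl fun j hj => by simp only [lam, if_neg (not_lt.2 (mem_Ico.1 hj).1)]
  rw [hsplit, hsplit, hhead, htail, add_lt_add_iff_right, loss_const, loss_const,
    log_mul hc.ne' hρ0.ne', ← div_div]
  change s / ρ + W * (log c + log ρ) < s + W * log c
  have hsρ : s / ρ = W := by simp only [ρ]; field_simp [(hw.trans hwd).ne']
  -- `ρ = s / W` makes the change of `ℒ` equal to `W - s + W log ρ < W - s + W (ρ - 1) = 0`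
  have hlog := mul_lt_mul_of_pos_left (log_lt_sub_one_of_pos hρ0 hρ1.ne') hw
  rw [mul_sub, mul_one, ← hsρ, div_mul_cancel₀ _ hρ0.ne', hsρ] at hlog
  rw [hsρ]
  linarith

/-- The paper's `η_k`. -/
noncomputable def knot (q : ℕ) (d a : ℕ → ℝ) (k : ℕ) : ℝ :=
  (q * (∑ j ∈ range k, d j) / (∑ j ∈ range q, d j) - k) / ∑ j ∈ range k, a j

theorem knot_le_iff (ha : ∀ j, j + 1 < q → a (j + 1) < a j) (hasum : ∑ j ∈ range q, a j = 0)
    {k : ℕ} (hk0 : 0 < k) (hkq : k < q) :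
    knot q d a k ≤ η ↔
      (∑ j ∈ range k, d j) / ((∑ j ∈ range q, d j) / q) ≤ ∑ j ∈ range k, (1 + η * a j) := by
  rw [knot, div_le_iff₀ (sum_range_pos_of_sum_eq_zero ha hasum hk0 hkq), div_div_eq_mul_div,
    mul_comm (∑ j ∈ range k, d j), sub_le_iff_le_add, add_comm, sum_range_one_add_mul]

theorem knot_pos (hd : ∀ j, j + 1 < q → d (j + 1) < d j) (hdpos : ∀ j < q, 0 < d j)
    (ha : ∀ j, j + 1 < q → a (j + 1) < a j) (hasum : ∑ j ∈ range q, a j = 0)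
    {k : ℕ} (hk0 : 0 < k) (hkq : k < q) : 0 < knot q d a k := by
  have hDq := sum_range_pos hdpos (hk0.trans hkq)
  refine div_pos (sub_pos.2 ?_) (sum_range_pos_of_sum_eq_zero ha hasum hk0 hkq)
  rw [lt_div_iff₀ hDq]
  exact mul_sum_range_lt_mul_sum_range hd hk0 hkq

theorem sum_range_one_add_mul_eq (hDq : ∑ j ∈ range q, d j ≠ 0)
    (hasum : ∑ j ∈ range q, a j = 0) :
    ∑ j ∈ range q, (1 + η * a j) = (∑ j ∈ range q, d j) / ((∑ j ∈ range q, d j) / q) := by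
  rw [sum_range_one_add_mul, hasum, mul_zero, add_zero, div_div_eq_mul_div,
    mul_div_cancel_left₀ _ hDq]

def IsLossMinimizer (q : ℕ) (d w lam : ℕ → ℝ) : Prop :=
  ((∀ j, j + 1 < q → lam (j + 1) ≤ lam j) ∧ (∀ j < q, 0 < lam j)) ∧
    ∀ lam' : ℕ → ℝ, (∀ j, j + 1 < q → lam' (j + 1) ≤ lam' j) → (∀ j < q, 0 < lam' j) →
      loss q d w lam ≤ loss q d w lam' ∧
        (loss q d w lam' = loss q d w lam → ∀ j < q, lam' j = lam j)

namespace IsLossMinimizer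

theorem eq_of_loss_const_le (hmin : IsLossMinimizer q d w lam) (hc : 0 < c)
    (hle : loss q d w (fun _ => c) ≤ loss q d w lam) : ∀ j < q, lam j = c := fun j hj =>
  have hmin_c := hmin.2 (fun _ => c) (fun _ _ => le_rfl) (fun _ _ => hc)
  (hmin_c.2 (le_antisymm hle hmin_c.1) j hj).symm

theorem eq_const_iff (hmin : IsLossMinimizer q d w lam) (hd : ∀ j < q, 0 ≤ d j) (hc : 0 < c)
    (hw : ∀ k, 0 < k → k < q → 0 < ∑ j ∈ range k, w j)
    (htot : ∑ j ∈ range q, w j = (∑ j ∈ range q, d j) / c) :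
    (∀ j < q, lam j = c) ↔
      ∀ k, 0 < k → k < q → (∑ j ∈ range k, d j) / c ≤ ∑ j ∈ range k, w j := by
  refine ⟨fun hconst k hk0 hkq => ?_, fun hpart => hmin.eq_of_loss_const_le hc ?_⟩
  · by_contra hlt
    obtain ⟨lam', hanti, hpos, hlt⟩ :=
      exists_loss_lt_loss_const hkq.le hc (hw k hk0 hkq) (not_le.1 hlt)
    have hle := (hmin.2 lam' hanti hpos).1
    rw [loss_congr hconst] at hle
    exact hle.not_gt hlt
  · exact loss_const_le_loss_of_antitone hd hc hmin.1.1 hmin.1.2 hpart htot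

theorem eq_of_forall_eq (hmin : IsLossMinimizer q d w lam) (hd : ∀ j < q, 0 ≤ d j) (hc : 0 < c)
    (htot : ∑ j ∈ range q, w j = (∑ j ∈ range q, d j) / c) (hq : 0 < q)
    (hconst : ∀ i, i < q → ∀ j, j < q → lam i = lam j) : ∀ j < q, lam j = c := by
  refine hmin.eq_of_loss_const_le hc ?_
  rw [loss_congr fun j hj => hconst j hj 0 hq]
  exact loss_const_le_loss_const hd hc (hmin.1.2 0 hq) htot

theorem eq_mean_iff (hmin : IsLossMinimizer q d (fun j => 1 + η * a j) lam)
    (hη : 0 ≤ η) (hdpos : ∀ j < q, 0 < d j) (ha : ∀ j, j + 1 < q → a (j + 1) < a j)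
    (hasum : ∑ j ∈ range q, a j = 0) (hq : 0 < q) :
    (∀ j < q, lam j = (∑ j ∈ range q, d j) / q) ↔ ∀ k, 0 < k → k < q → knot q d a k ≤ η := by
  have hDq := sum_range_pos hdpos hq
  rw [hmin.eq_const_iff (fun j hj => (hdpos j hj).le) (div_pos hDq (Nat.cast_pos.2 hq))
    (fun k hk0 hkq => ?_) (sum_range_one_add_mul_eq hDq.ne' hasum)]
  · exact forall₃_congr fun k hk0 hkq => (knot_le_iff ha hasum hk0 hkq).symm
  · rw [sum_range_one_add_mul]
    exact add_pos_of_pos_of_nonneg (Nat.cast_pos.2 hk0)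
      (mul_nonneg hη (sum_range_pos_of_sum_eq_zero ha hasum hk0 hkq).le)

theorem eq_mean_of_forall_eq
    (hmin : IsLossMinimizer q d (fun j => 1 + η * a j) lam) (hdpos : ∀ j < q, 0 < d j)
    (hasum : ∑ j ∈ range q, a j = 0) (hq : 0 < q)
    (hconst : ∀ i, i < q → ∀ j, j < q → lam i = lam j) :
    ∀ j < q, lam j = (∑ j ∈ range q, d j) / q := by
  have hDq := sum_range_pos hdpos hq
  exact hmin.eq_of_forall_eq (fun j hj => (hdpos j hj).le) (div_pos hDq (Nat.cast_pos.2 hq))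
    (sum_range_one_add_mul_eq hDq.ne' hasum) hq hconst

end IsLossMinimizer

end Elasso

open Elasso

/-- the last knot of the elasso path.  With `d₁ > ⋯ > d_q > 0`
(0-indexed: `d 0 > ⋯ > d (q−1)`), strictly decreasing weights `a` summing to zero,
`λ̂(η)` the unique minimizer of `ℒ(λ; d, η) = ∑_j (d_j/λ_j + (1 + η a_j) log λ_j)`
over `λ₁ ≥ ⋯ ≥ λ_q > 0`, `D_k, A_k` the partial sums, `d̄ = D_q/q`, and
`η_k = (q D_k/D_q − k)/A_k` (`1 ≤ k ≤ q−1`): the `A_k` are positive, `λ̂(η)` is the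
constant vector `(d̄, …, d̄)` iff `η ≥ max_k η_k`, and
`inf{η ≥ 0 : λ̂(η) constant} = max_k η_k`. -/
theorem stmt_18 (q : ℕ) (hq : 2 ≤ q) (d a : ℕ → ℝ)
    (hd : ∀ j, j + 1 < q → d (j + 1) < d j) (hdpos : ∀ j, j < q → 0 < d j)
    (ha : ∀ j, j + 1 < q → a (j + 1) < a j)
    (hasum : ∑ j ∈ Finset.range q, a j = 0)
    (lamhat : ℝ → ℕ → ℝ)
    (hmin : ∀ η : ℝ, 0 ≤ η →
      ((∀ j, j + 1 < q → lamhat η (j + 1) ≤ lamhat η j) ∧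
        (∀ j, j < q → 0 < lamhat η j)) ∧
      ∀ lam : ℕ → ℝ, (∀ j, j + 1 < q → lam (j + 1) ≤ lam j) →
        (∀ j, j < q → 0 < lam j) →
        ((∑ j ∈ Finset.range q,
            (d j / lamhat η j + (1 + η * a j) * Real.log (lamhat η j))) ≤
          ∑ j ∈ Finset.range q,
            (d j / lam j + (1 + η * a j) * Real.log (lam j))) ∧
        ((∑ j ∈ Finset.range q,
            (d j / lam j + (1 + η * a j) * Real.log (lam j))) =
          (∑ j ∈ Finset.range q,
            (d j / lamhat η j + (1 + η * a j) * Real.log (lamhat η j))) →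
          ∀ j, j < q → lam j = lamhat η j))
    (D A : ℕ → ℝ)
    (hD : ∀ k, D k = ∑ j ∈ Finset.range k, d j)
    (hA : ∀ k, A k = ∑ j ∈ Finset.range k, a j)
    (dbar : ℝ) (hdbar : dbar = D q / q)
    (ηk : ℕ → ℝ)
    (hηk : ∀ k, 1 ≤ k → k ≤ q - 1 → ηk k = (q * D k / D q - k) / A k)
    (ηmax : ℝ)
    (hηmax : ηmax = Finset.sup' (Finset.Icc 1 (q - 1))
      (Finset.nonempty_Icc.mpr (by omega)) ηk) :
    (∀ k, 1 ≤ k → k ≤ q - 1 → 0 < A k) ∧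
    (∀ η : ℝ, 0 ≤ η → ((∀ j, j < q → lamhat η j = dbar) ↔ ηmax ≤ η)) ∧
    sInf {η : ℝ | 0 ≤ η ∧ ∀ i, i < q → ∀ j, j < q → lamhat η i = lamhat η j}
      = ηmax := by
  obtain rfl : D = fun k => ∑ j ∈ range k, d j := funext hD
  obtain rfl : A = fun k => ∑ j ∈ range k, a j := funext hA
  subst hdbar
  have hq0 : 0 < q := by omega
  have hηk' (k : ℕ) (hk1 : 1 ≤ k) (hkq : k ≤ q - 1) : ηk k = knot q d a k := hηk k hk1 hkq
  have hηmax_le (η : ℝ) : ηmax ≤ η ↔ ∀ k, 0 < k → k < q → knot q d a k ≤ η := by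
    rw [hηmax, sup'_le_iff]
    refine forall_congr' fun k => ⟨fun h hk0 hkq => ?_, fun h hk => ?_⟩
    · exact hηk' k hk0 (by omega) ▸ h (mem_Icc.2 ⟨hk0, by omega⟩)
    · obtain ⟨hk1, hkq⟩ := mem_Icc.1 hk
      exact hηk' k hk1 hkq ▸ h hk1 (by omega)
  have hiff (η : ℝ) (hη : 0 ≤ η) :
      (∀ j < q, lamhat η j = (∑ j ∈ range q, d j) / q) ↔ ηmax ≤ η := by
    rw [IsLossMinimizer.eq_mean_iff (hmin η hη) hη hdpos ha hasum hq0, hηmax_le]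
  have hηmax0 : 0 ≤ ηmax := (knot_pos hd hdpos ha hasum one_pos (by omega)).le.trans
    ((hηmax_le ηmax).1 le_rfl 1 one_pos (by omega))
  refine ⟨fun k hk1 hkq => sum_range_pos_of_sum_eq_zero ha hasum hk1 (by omega), hiff, ?_⟩
  have hset : {η : ℝ | 0 ≤ η ∧ ∀ i, i < q → ∀ j, j < q → lamhat η i = lamhat η j}
      = Set.Ici ηmax := by
    ext η
    refine ⟨fun ⟨hη, hconst⟩ =>
      (hiff η hη).1 (IsLossMinimizer.eq_mean_of_forall_eq (hmin η hη) hdpos hasum hq0 hconst),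
      fun hle => ?_⟩
    have hconst := (hiff η (hηmax0.trans hle)).2 hle
    exact ⟨hηmax0.trans hle, fun i hi j hj => by rw [hconst i hi, hconst j hj]⟩
  rw [hset, csInf_Ici]
end
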